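/- arXiv:2412.08617 — 2 statements merged into one kernel-verified Lean document; each statement's English description precedes it below -/
import Mathlib

section
/- Let p ≥ 1 be an integer and let g₁ and g₂ be graphs with exactly 2p external half-edges each, all of whose vertices have even valence. For a bijection σ from the external half-edges of g₁ to those of g₂, let g₁∪_σ g₂ denote the vacuum graph obtained by gluing each external half-edge of g₁ to its image under σ. Then the sum over all (2p)! bijections σ satisfies Σ_σ J(g₁∪_σ g₂, N) = 2^p·p!·(∏_{j=0}^{p−1}(N+2j))·J(g₁, N)·J(g₂, N). -/
/-- A finite multigraph presented by half-edges: `vtx h` is the vertex at which the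
half-edge `h` is attached, and `edg` is an involution pairing the two half-edges of
each internal edge; its fixed points are the external half-edges. -/
structure HGraph where
  V : Type
  H : Type
  fintypeV : Fintype V
  fintypeH : Fintype H
  decEqV : DecidableEq V
  decEqH : DecidableEq H
  vtx : H → V
  edg : H → H
  edg_invol : ∀ h, edg (edg h) = h

attribute [instance] HGraph.fintypeV HGraph.fintypeH HGraph.decEqV HGraph.decEqH

namespace HGraph

variable (G : HGraph)

/-- A half-edge is external if the edge involution fixes it. -/
def IsExternal (h : G.H) : Prop := G.edg h = h

instance : DecidablePred G.IsExternal := fun h => inferInstanceAs (Decidable (G.edg h = h))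

/-- The valence of a vertex: the number of half-edges incident to it. -/
def valence (v : G.V) : ℕ := Fintype.card {h : G.H // G.vtx h = v}

/-- The number of external half-edges. -/
def extCard : ℕ := Fintype.card {h : G.H // G.IsExternal h}

/-- A vacuum graph has no external half-edges. -/
def IsVacuum : Prop := ∀ h : G.H, ¬ G.IsExternal h

/-- A decomposition of a graph: at every vertex, a partition of the incident
half-edges into pairs (encoded as a fixed-point-free involution fixing each vertex). -/
def Decomp : Type :=
  {p : G.H → G.H //
    (∀ h, p (p h) = h) ∧ (∀ h, p h ≠ h) ∧ ∀ h, G.vtx (p h) = G.vtx h}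

instance : Fintype G.Decomp :=
  inferInstanceAs (Fintype {p : G.H → G.H //
    (∀ h, p (p h) = h) ∧ (∀ h, p h ≠ h) ∧ ∀ h, G.vtx (p h) = G.vtx h})

/-- Two half-edges are one step apart (relative to a decomposition `d`) if they are
joined by an edge or paired at a vertex by `d`. -/
def dstep (d : G.Decomp) (h h' : G.H) : Prop := G.edg h = h' ∨ d.1 h = h'

/-- The circuits and paths of a decomposition are the equivalence classes of the
relation generated by `dstep`. -/
def dsetoid (d : G.Decomp) : Setoid G.H :=
  ⟨Relation.EqvGen (G.dstep d), Relation.EqvGen.is_equivalence _⟩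

/-- The type of circuits/paths of a decomposition. -/
def Circuits (d : G.Decomp) : Type := Quotient (G.dsetoid d)

def circuitOf (d : G.Decomp) (h : G.H) : G.Circuits d := Quotient.mk (G.dsetoid d) h

/-- A circuit is closed if it contains no external half-edge (otherwise it is an
open path ending at external half-edges). -/
def IsClosed (d : G.Decomp) (c : G.Circuits d) : Prop :=
  ∀ h : G.H, G.circuitOf d h = c → ¬ G.IsExternal h

/-- The number of closed circuits of a decomposition. -/
noncomputable def ncircuits (d : G.Decomp) : ℕ :=
  Nat.card {c : G.Circuits d // G.IsClosed d c}

/-- The circuit partition polynomial `J(G,N)`: the sum over all decompositions of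
`N` raised to the number of closed circuits. -/
noncomputable def J : Polynomial ℤ :=
  ∑ d : G.Decomp, (Polynomial.X : Polynomial ℤ) ^ G.ncircuits d

/-- The O(N) symmetry factor `T(G,N) = J(G,N)/J(G,1)`. -/
noncomputable def T : Polynomial ℚ :=
  Polynomial.C (((G.J.eval 1 : ℤ) : ℚ))⁻¹ * G.J.map (Int.castRingHom ℚ)

/-- Two vertices are adjacent if some edge connects them. -/
def adj (v w : G.V) : Prop := ∃ h : G.H, G.vtx h = v ∧ G.vtx (G.edg h) = w

/-- The graph is connected. -/
def Connected : Prop := ∀ v w : G.V, Relation.ReflTransGen G.adj v w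

/-- An `L`-loop completion: a connected 4-regular vacuum graph with `L+2` vertices. -/
def IsCompletion (L : ℕ) : Prop :=
  G.IsVacuum ∧ G.Connected ∧ (∀ v, G.valence v = 4) ∧ Fintype.card G.V = L + 2

/-- The number of edges crossing from `S` to its complement. -/
def cutSize (S : Finset G.V) : ℕ :=
  (Finset.univ.filter fun h : G.H => G.vtx h ∈ S ∧ G.vtx (G.edg h) ∉ S).card

/-- The induced subgraph on `S` contains a cycle: there is a nonempty set of
internal half-edges inside `S`, closed under the edge involution, in which every
incident vertex meets at least two of these half-edges. -/
def HasCycleIn (S : Set G.V) : Prop :=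
  ∃ E : Finset G.H, E.Nonempty ∧
    (∀ h ∈ E, G.vtx h ∈ S ∧ ¬ G.IsExternal h ∧ G.edg h ∈ E) ∧
    ∀ h ∈ E, 2 ≤ (E.filter fun h' => G.vtx h' = G.vtx h).card

/-- Cyclic 6-edge-connectivity: every edge cut separating two subgraphs which each
contain a cycle has at least 6 edges. -/
def CyclicallySixEdgeConnected : Prop :=
  ∀ S : Finset G.V, G.HasCycleIn ↑S → G.HasCycleIn ↑(Sᶜ) → 6 ≤ G.cutSize S

/-- A primitive `L`-loop completion. -/
def IsPrimitiveCompletion (L : ℕ) : Prop :=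
  G.IsCompletion L ∧ G.CyclicallySixEdgeConnected

end HGraph

/-- Isomorphism of half-edge multigraphs. -/
structure HGraph.Iso (G₁ G₂ : HGraph) where
  eV : G₁.V ≃ G₂.V
  eH : G₁.H ≃ G₂.H
  vtx_eq : ∀ h, G₂.vtx (eH h) = eV (G₁.vtx h)
  edg_eq : ∀ h, G₂.edg (eH h) = eH (G₁.edg h)

/-- Two graphs are isomorphic. -/
def HGraph.IsIsomorphic (G₁ G₂ : HGraph) : Prop := Nonempty (HGraph.Iso G₁ G₂)
namespace HGraph

variable (G : HGraph)

/-- The decompletion of a graph at a vertex `v`: delete `v` together with its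
half-edges; half-edges formerly joined to a half-edge at `v` become external. -/
def decompletion (v : G.V) : HGraph where
  V := {w : G.V // w ≠ v}
  H := {h : G.H // G.vtx h ≠ v}
  fintypeV := inferInstance
  fintypeH := inferInstance
  decEqV := inferInstance
  decEqH := inferInstance
  vtx h := ⟨G.vtx h.1, h.2⟩
  edg h := if hc : G.vtx (G.edg h.1) = v then h else ⟨G.edg h.1, hc⟩
  edg_invol := by
    rintro ⟨h, hh⟩
    dsimp only
    by_cases hc : G.vtx (G.edg h) = v
    · simp [hc]
    · rw [dif_neg hc]
      rw [dif_neg (show ¬ G.vtx (G.edg (G.edg h)) = v by rw [G.edg_invol]; exact hh)]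
      simp [G.edg_invol]

/-- The completion of a graph `g`: all external half-edges of `g` are joined to a
single new vertex. -/
def completion : HGraph where
  V := Option G.V
  H := G.H ⊕ {h : G.H // G.IsExternal h}
  fintypeV := inferInstance
  fintypeH := inferInstance
  decEqV := inferInstance
  decEqH := inferInstance
  vtx := Sum.elim (fun h => some (G.vtx h)) fun _ => none
  edg := fun x =>
    match x with
    | .inl h => if hx : G.IsExternal h then .inr ⟨h, hx⟩ else .inl (G.edg h)
    | .inr y => .inl y.1
  edg_invol := by
    rintro (h | y)
    · by_cases hx : G.IsExternal h
      · simp [hx]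
      · have hx' : ¬ G.IsExternal (G.edg h) := by
          intro hcon
          unfold IsExternal at hcon
          rw [G.edg_invol] at hcon
          exact hx hcon.symm
        simp [hx, hx', G.edg_invol]
    · simp [y.2]

end HGraph
namespace HGraph

/-- Gluing two graphs along a bijection `σ` between their external half-edges. -/
def glue (g₁ g₂ : HGraph)
    (σ : {h : g₁.H // g₁.IsExternal h} ≃ {h : g₂.H // g₂.IsExternal h}) : HGraph where
  V := g₁.V ⊕ g₂.V
  H := g₁.H ⊕ g₂.H
  fintypeV := inferInstance
  fintypeH := inferInstance
  decEqV := inferInstance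
  decEqH := inferInstance
  vtx := Sum.elim (fun h => .inl (g₁.vtx h)) fun h => .inr (g₂.vtx h)
  edg := Sum.elim
    (fun h => if hx : g₁.IsExternal h then .inr (σ ⟨h, hx⟩).1 else .inl (g₁.edg h))
    (fun h => if hx : g₂.IsExternal h then .inl (σ.symm ⟨h, hx⟩).1 else .inr (g₂.edg h))
  edg_invol := by
    rintro (h | h)
    · rw [Sum.elim_inl]
      by_cases hx : g₁.IsExternal h
      · rw [dif_pos hx, Sum.elim_inr, dif_pos (σ ⟨h, hx⟩).2]
        simp
      · have hx' : ¬ g₁.IsExternal (g₁.edg h) := by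
          intro hcon; unfold IsExternal at hcon
          rw [g₁.edg_invol] at hcon; exact hx hcon.symm
        rw [dif_neg hx, Sum.elim_inl, dif_neg hx', g₁.edg_invol]
    · rw [Sum.elim_inr]
      by_cases hx : g₂.IsExternal h
      · rw [dif_pos hx, Sum.elim_inl, dif_pos (σ.symm ⟨h, hx⟩).2]
        simp
      · have hx' : ¬ g₂.IsExternal (g₂.edg h) := by
          intro hcon; unfold IsExternal at hcon
          rw [g₂.edg_invol] at hcon; exact hx hcon.symm
        rw [dif_neg hx, Sum.elim_inr, dif_neg hx', g₂.edg_invol]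

/-- Insertion of the graph `g₁` into the graph `g₂` in place of the vertex `v₂`:
delete `v₂` and glue the external half-edges of `g₁` to the severed half-edges
according to the bijection `σ`. -/
def insertAt (g₁ g₂ : HGraph) (v₂ : g₂.V)
    (σ : {h : g₁.H // g₁.IsExternal h} ≃ {h : g₂.H // g₂.vtx h = v₂}) : HGraph where
  V := g₁.V ⊕ {w : g₂.V // w ≠ v₂}
  H := g₁.H ⊕ {h : g₂.H // g₂.vtx h ≠ v₂}
  fintypeV := inferInstance
  fintypeH := inferInstance
  decEqV := inferInstance
  decEqH := inferInstance
  vtx := Sum.elim (fun h => .inl (g₁.vtx h)) fun h => .inr ⟨g₂.vtx h.1, h.2⟩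
  edg := Sum.elim
    (fun h =>
      if hx : g₁.IsExternal h then
        if hc : g₂.vtx (g₂.edg (σ ⟨h, hx⟩).1) = v₂ then
          .inl (σ.symm ⟨g₂.edg (σ ⟨h, hx⟩).1, hc⟩).1
        else .inr ⟨g₂.edg (σ ⟨h, hx⟩).1, hc⟩
      else .inl (g₁.edg h))
    (fun h =>
      if hc : g₂.vtx (g₂.edg h.1) = v₂ then .inl (σ.symm ⟨g₂.edg h.1, hc⟩).1
      else .inr ⟨g₂.edg h.1, hc⟩)
  edg_invol := by
    rintro (h | h)
    · rw [Sum.elim_inl]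
      by_cases hx : g₁.IsExternal h
      · rw [dif_pos hx]
        by_cases hc : g₂.vtx (g₂.edg (σ ⟨h, hx⟩).1) = v₂
        · rw [dif_pos hc, Sum.elim_inl, dif_pos (σ.symm ⟨g₂.edg (σ ⟨h, hx⟩).1, hc⟩).2]
          simp only [Subtype.coe_eta, Equiv.apply_symm_apply]
          rw [dif_pos (show g₂.vtx (g₂.edg (g₂.edg (σ ⟨h, hx⟩).1)) = v₂ by
            rw [g₂.edg_invol]; exact (σ ⟨h, hx⟩).2)]
          simp only [g₂.edg_invol, Subtype.coe_eta, Equiv.symm_apply_apply]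
        · rw [dif_neg hc, Sum.elim_inr]
          simp only
          rw [dif_pos (show g₂.vtx (g₂.edg (g₂.edg (σ ⟨h, hx⟩).1)) = v₂ by
            rw [g₂.edg_invol]; exact (σ ⟨h, hx⟩).2)]
          simp only [g₂.edg_invol, Subtype.coe_eta, Equiv.symm_apply_apply]
      · have hx' : ¬ g₁.IsExternal (g₁.edg h) := by
          intro hcon; unfold IsExternal at hcon
          rw [g₁.edg_invol] at hcon; exact hx hcon.symm
        rw [dif_neg hx, Sum.elim_inl, dif_neg hx', g₁.edg_invol]
    · rw [Sum.elim_inr]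
      by_cases hc : g₂.vtx (g₂.edg h.1) = v₂
      · rw [dif_pos hc, Sum.elim_inl, dif_pos (σ.symm ⟨g₂.edg h.1, hc⟩).2]
        simp only [Subtype.coe_eta, Equiv.apply_symm_apply]
        rw [dif_neg (show ¬ g₂.vtx (g₂.edg (g₂.edg h.1)) = v₂ by
          rw [g₂.edg_invol]; exact h.2)]
        simp only [g₂.edg_invol, Subtype.coe_eta, Equiv.symm_apply_apply]
      · rw [dif_neg hc, Sum.elim_inr]
        simp only
        rw [dif_neg (show ¬ g₂.vtx (g₂.edg (g₂.edg h.1)) = v₂ by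
          rw [g₂.edg_invol]; exact h.2)]
        simp only [g₂.edg_invol, Subtype.coe_eta]

end HGraph
namespace HGraph

variable (G : HGraph)

/-- Insertion of a propagator-type graph `p` into the internal edge `{h₀, edg h₀}`
of the graph `g`: cut the edge and glue the two external half-edges of `p` to the
two severed half-edges according to the bijection `σ`. -/
def insertEdge (p g : HGraph) (h₀ : g.H)
    (σ : {y : p.H // p.IsExternal y} ≃ {x : g.H // x = h₀ ∨ x = g.edg h₀}) : HGraph where
  V := g.V ⊕ p.V
  H := g.H ⊕ p.H
  fintypeV := inferInstance
  fintypeH := inferInstance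
  decEqV := inferInstance
  decEqH := inferInstance
  vtx := Sum.elim (fun h => .inl (g.vtx h)) fun h => .inr (p.vtx h)
  edg := Sum.elim
    (fun x => if hx : x = h₀ ∨ x = g.edg h₀ then .inr (σ.symm ⟨x, hx⟩).1
      else .inl (g.edg x))
    (fun y => if hy : p.IsExternal y then .inl (σ ⟨y, hy⟩).1 else .inr (p.edg y))
  edg_invol := by
    rintro (x | y)
    · rw [Sum.elim_inl]
      by_cases hx : x = h₀ ∨ x = g.edg h₀
      · rw [dif_pos hx, Sum.elim_inr, dif_pos (σ.symm ⟨x, hx⟩).2]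
        simp only [Subtype.coe_eta, Equiv.apply_symm_apply]
      · have hx' : ¬ (g.edg x = h₀ ∨ g.edg x = g.edg h₀) := by
          rintro (hh | hh)
          · exact hx (Or.inr (by rw [← hh, g.edg_invol]))
          · exact hx (Or.inl (by
              have := congrArg g.edg hh
              rwa [g.edg_invol, g.edg_invol] at this))
        rw [dif_neg hx, Sum.elim_inl, dif_neg hx', g.edg_invol]
    · rw [Sum.elim_inr]
      by_cases hy : p.IsExternal y
      · rw [dif_pos hy, Sum.elim_inl, dif_pos (σ ⟨y, hy⟩).2]
        simp only [Subtype.coe_eta, Equiv.symm_apply_apply]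
      · have hy' : ¬ p.IsExternal (p.edg y) := by
          intro hcon; unfold IsExternal at hcon
          rw [p.edg_invol] at hcon; exact hy hcon.symm
        rw [dif_neg hy, Sum.elim_inr, dif_neg hy', p.edg_invol]

/-- The setoid on half-edges identifying the two half-edges of each edge;
its classes are the edges of the graph. -/
def edgeSetoid : Setoid G.H :=
  ⟨fun h h' => h' = h ∨ h' = G.edg h, by
    constructor
    · intro h; exact Or.inl rfl
    · intro a b hab
      rcases hab with h | h
      · exact Or.inl h.symm
      · exact Or.inr (by rw [h, G.edg_invol])
    · intro a b c hab hbc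
      rcases hab with h | h <;> rcases hbc with h' | h'
      · exact Or.inl (h'.trans h)
      · exact Or.inr (by rw [h', h])
      · exact Or.inr (h'.trans h)
      · exact Or.inl (by rw [h', h, G.edg_invol])⟩

instance edgeSetoidDecidable : DecidableRel (G.edgeSetoid).r := fun h h' =>
  inferInstanceAs (Decidable (h' = h ∨ h' = G.edg h))

/-- The type of edges of a graph. -/
def Edges : Type := Quotient G.edgeSetoid

instance : DecidableEq G.Edges :=
  @Quotient.decidableEq _ G.edgeSetoid G.edgeSetoidDecidable

instance : Fintype G.Edges :=
  @Quotient.fintype _ _ G.edgeSetoid G.edgeSetoidDecidable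

def edgeOf (h : G.H) : G.Edges := Quotient.mk G.edgeSetoid h

/-- The line graph: its vertices are the edges of `G`, and each unordered pair of
distinct half-edges sitting at a common vertex of `G` gives an edge between the
corresponding edges of `G`. -/
def lineGraph : HGraph where
  V := G.Edges
  H := {q : G.H × G.H // G.vtx q.1 = G.vtx q.2 ∧ q.1 ≠ q.2}
  fintypeV := inferInstance
  fintypeH := inferInstance
  decEqV := inferInstance
  decEqH := inferInstance
  vtx q := G.edgeOf q.1.1
  edg q := ⟨(q.1.2, q.1.1), q.2.1.symm, Ne.symm q.2.2⟩
  edg_invol := by rintro ⟨⟨a, b⟩, hq⟩; rfl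

/-- Two half-edges spanning a pair of distinct parallel edges (a double edge). -/
def ParallelPair (h₁ h₂ : G.H) : Prop :=
  G.vtx h₁ = G.vtx h₂ ∧ G.vtx (G.edg h₁) = G.vtx (G.edg h₂) ∧ h₂ ≠ h₁ ∧ h₂ ≠ G.edg h₁

/-- A simple graph: no self-loops and no parallel edges. -/
def Simple : Prop :=
  (∀ h, G.vtx (G.edg h) ≠ G.vtx h) ∧ ∀ h₁ h₂, ¬ G.ParallelPair h₁ h₂

/-- 3-edge-connectivity: connected, and every edge cut between a nonempty vertex
set and its nonempty complement has at least 3 edges. -/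
def ThreeEdgeConnected : Prop :=
  G.Connected ∧ ∀ S : Finset G.V, S.Nonempty → (Sᶜ : Finset G.V).Nonempty → 3 ≤ G.cutSize S

end HGraph

/-- The octahedron graph `K_{2,2,2}`: six vertices, two in each of three groups,
with an edge between any two vertices of different groups. -/
def octahedron : HGraph where
  V := Fin 3 × Fin 2
  H := {q : (Fin 3 × Fin 2) × (Fin 3 × Fin 2) // q.1.1 ≠ q.2.1}
  fintypeV := inferInstance
  fintypeH := inferInstance
  decEqV := inferInstance
  decEqH := inferInstance
  vtx q := q.1.1
  edg q := ⟨(q.1.2, q.1.1), Ne.symm q.2⟩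
  edg_invol := by rintro ⟨⟨a, b⟩, hq⟩; rfl

/-- The fish graph: two 4-valent vertices joined by a double edge, with two
external half-edges at each vertex. -/
def fishGraph : HGraph where
  V := Bool
  H := Bool × Fin 4
  fintypeV := inferInstance
  fintypeH := inferInstance
  decEqV := inferInstance
  decEqH := inferInstance
  vtx q := q.1
  edg q := if (q.2 : ℕ) ≤ 1 then (!q.1, q.2) else q
  edg_invol := by
    rintro ⟨b, j⟩
    by_cases hj : (j : ℕ) ≤ 1 <;> simp [hj]

namespace GlueAux

variable {A : Type}

/-- Step relation generated by two pairings. -/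
def mstep (α τ : A → A) (x y : A) : Prop := α x = y ∨ τ x = y

def mSetoid (α τ : A → A) : Setoid A :=
  ⟨Relation.EqvGen (mstep α τ), Relation.EqvGen.is_equivalence _⟩

abbrev MComps (α τ : A → A) : Type := Quotient (mSetoid α τ)

noncomputable def mcount (α τ : A → A) : ℕ := Nat.card (MComps α τ)

theorem mk_eq_of_step {α τ : A → A} {x y : A} (h : mstep α τ x y) :
    (Quotient.mk (mSetoid α τ) x) = Quotient.mk (mSetoid α τ) y :=
  Quotient.sound (Relation.EqvGen.rel _ _ h)

section Pair

variable {A' : Type} (ι : A' → A) (α τ : A → A) (α' τ' : A' → A')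

/-- Closing lemma: if `{a,b}` is a joint pair of both `α` and `τ`, removing it
drops the component count by one. -/
theorem mcount_pair [Finite A]
    (hι : Function.Injective ι)
    (hα : ∀ x, α (α x) = x) (hτ : ∀ x, τ (τ x) = x)
    (a b : A) (hab : a ≠ b) (hαa : α a = b) (hτa : τ a = b)
    (hrange : ∀ x : A, x ≠ a → x ≠ b → ∃ x', ι x' = x)
    (hmem : ∀ x', ι x' ≠ a ∧ ι x' ≠ b)
    (hcα : ∀ x', ι (α' x') = α (ι x'))
    (hcτ : ∀ x', ι (τ' x') = τ (ι x')) :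
    mcount α τ = mcount α' τ' + 1 := by
  classical
  have hαb : α b = a := by rw [← hαa, hα]
  have hτb : τ b = a := by rw [← hτa, hτ]
  have pre : ∀ x : A, x ≠ a → x ≠ b → {x' : A' // ι x' = x} := fun x h1 h2 =>
    ⟨(hrange x h1 h2).choose, (hrange x h1 h2).choose_spec⟩
  set f : A → MComps α' τ' ⊕ Unit := fun x =>
    if h : x = a ∨ x = b then Sum.inr () else
      Sum.inl (Quotient.mk _ (pre x (fun h1 => h (Or.inl h1)) (fun h2 => h (Or.inr h2))).1)
    with hf
  have hstep : ∀ x y, mstep α τ x y → f x = f y := by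
    intro x y hxy
    by_cases hx : x = a ∨ x = b
    · have hy : y = a ∨ y = b := by
        rcases hxy with h | h <;> rcases hx with h2 | h2 <;> rw [← h, h2]
        · exact Or.inr hαa
        · exact Or.inl hαb
        · exact Or.inr hτa
        · exact Or.inl hτb
      rw [hf]; simp only [dif_pos hx, dif_pos hy]
    · have hy : ¬ (y = a ∨ y = b) := by
        intro hy
        apply hx
        rcases hxy with h | h <;> rcases hy with h2 | h2
        · exact Or.inr (by rw [← hα x, h, h2, hαa])
        · exact Or.inl (by rw [← hα x, h, h2, hαb])
        · exact Or.inr (by rw [← hτ x, h, h2, hτa])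
        · exact Or.inl (by rw [← hτ x, h, h2, hτb])
      rw [hf]; simp only [dif_neg hx, dif_neg hy]
      congr 1
      apply mk_eq_of_step
      push_neg at hx hy
      have hx' := (pre x hx.1 hx.2).2
      have hy' := (pre y hy.1 hy.2).2
      show mstep α' τ' _ _
      rcases hxy with h | h
      · exact Or.inl (hι (by rw [hcα, hx', hy', h]))
      · exact Or.inr (hι (by rw [hcτ, hx', hy', h]))
  have hrel : ∀ x y, Relation.EqvGen (mstep α τ) x y → f x = f y := by
    intro x y h
    induction h with
    | rel x y h => exact hstep x y h
    | refl x => rfl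
    | symm x y _ ih => exact ih.symm
    | trans x y z _ _ ih1 ih2 => exact ih1.trans ih2
  set F : MComps α τ → MComps α' τ' ⊕ Unit := Quotient.lift f hrel with hF
  have hstep' : ∀ (x' y' : A'), mstep α' τ' x' y' →
      (Quotient.mk (mSetoid α τ) (ι x')) = Quotient.mk (mSetoid α τ) (ι y') := by
    intro x' y' h
    apply mk_eq_of_step
    rcases h with h | h
    · exact Or.inl (by rw [← hcα, h])
    · exact Or.inr (by rw [← hcτ, h])
  have hrel' : ∀ x' y', Relation.EqvGen (mstep α' τ') x' y' →
      (Quotient.mk (mSetoid α τ) (ι x')) = Quotient.mk (mSetoid α τ) (ι y') := by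
    intro x' y' h
    induction h with
    | rel x y h => exact hstep' x y h
    | refl x => rfl
    | symm x y _ ih => exact ih.symm
    | trans x y z _ _ ih1 ih2 => exact ih1.trans ih2
  set G : MComps α' τ' ⊕ Unit → MComps α τ :=
    Sum.elim (Quotient.lift (fun x' => Quotient.mk _ (ι x')) hrel') (fun _ => Quotient.mk _ a)
    with hG
  have hFG : ∀ t, F (G t) = t := by
    rintro (c | u)
    · induction c using Quotient.ind with
      | _ x' =>
        show f (ι x') = _
        rw [hf]
        simp only [dif_neg (not_or.mpr (hmem x'))]
        congr 2
        exact hι (pre (ι x') _ _).2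
    · show f a = _
      exact dif_pos (Or.inl rfl)
  have hGF : ∀ c, G (F c) = c := by
    intro c
    induction c using Quotient.ind with
    | _ x =>
      show G (f x) = _
      by_cases hx : x = a ∨ x = b
      · rw [hf]; simp only [dif_pos hx, Sum.elim_inr]
        show Quotient.mk _ a = _
        rcases hx with rfl | h
        · rfl
        · rw [h]; exact mk_eq_of_step (Or.inl hαa)
      · rw [hf]; simp only [dif_neg hx, Sum.elim_inl]
        show Quotient.mk _ (ι _) = _
        push_neg at hx
        rw [(pre x hx.1 hx.2).2]
  have e : MComps α τ ≃ (MComps α' τ' ⊕ Unit) := ⟨F, G, hGF, hFG⟩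
  haveI : Finite A' := Finite.of_injective ι hι
  have hu : Nat.card Unit = 1 := Nat.card_unique
  rw [mcount, Nat.card_congr e, Nat.card_sum, hu, mcount]

end Pair

end GlueAux

namespace GlueAux

section Contract

variable {A A' : Type} (ι : A' → A) (α τ : A → A) (α' τ' : A' → A')

/-- Contraction lemma: removing the `τ`-pair `{a, τ a}` and rejoining the
`α`-partners does not change the component count. -/
theorem mcount_contract
    (hι : Function.Injective ι)
    (hα : ∀ x, α (α x) = x) (hτ : ∀ x, τ (τ x) = x) (hαf : ∀ x, α x ≠ x)
    (a c : A) (hτa : τ a = c) (hca : c ≠ a) (hcb : c ≠ α a)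
    (hrange : ∀ x : A, x ≠ a → x ≠ c → ∃ x', ι x' = x)
    (hmem : ∀ x', ι x' ≠ a ∧ ι x' ≠ c)
    (hcα : ∀ x', ι x' ≠ α a → ι x' ≠ α c → ι (α' x') = α (ι x'))
    (hcαb : ∀ x', ι x' = α a → ι (α' x') = α c)
    (hcαd : ∀ x', ι x' = α c → ι (α' x') = α a)
    (hcτ : ∀ x', ι (τ' x') = τ (ι x')) :
    mcount α τ = mcount α' τ' := by
  classical
  set b := α a with hb
  set d := α c with hd
  have hτc : τ c = a := by rw [← hτa, hτ]
  have hαb : α b = a := hα a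
  have hαd : α d = c := hα c
  have hba : b ≠ a := hαf a
  have hbc : b ≠ c := fun h => hcb h.symm
  have hda : d ≠ a := fun h => hcb (by rw [hb, ← h, hd, hα])
  have hdc : d ≠ c := hαf c
  have pre : ∀ x : A, x ≠ a → x ≠ c → {x' : A' // ι x' = x} := fun x h1 h2 =>
    ⟨(hrange x h1 h2).choose, (hrange x h1 h2).choose_spec⟩
  set r : A → A' := fun x =>
    if hx1 : x = a then (pre b hba hbc).1
    else if hx2 : x = c then (pre d hda hdc).1
    else (pre x hx1 hx2).1 with hr
  have hra : r a = (pre b hba hbc).1 := by simp only [hr]; simp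
  have hrc : r c = (pre d hda hdc).1 := by simp only [hr]; rw [dif_neg hca]; simp
  have hrother : ∀ x (h1 : x ≠ a) (h2 : x ≠ c), r x = (pre x h1 h2).1 := by
    intro x h1 h2; simp only [hr]; rw [dif_neg h1, dif_neg h2]
  have hstepbd : mstep α' τ' (pre b hba hbc).1 (pre d hda hdc).1 :=
    Or.inl (hι (by rw [hcαb _ (pre b hba hbc).2, (pre d hda hdc).2]))
  have hstepr : ∀ x y, mstep α τ x y → Relation.EqvGen (mstep α' τ') (r x) (r y) := by
    intro x y hxy
    rcases hxy with h | h
    · -- α-step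
      by_cases hx1 : x = a
      · subst hx1
        have : y = b := h.symm
        subst this
        rw [hra, hrother b hba hbc]
        exact Relation.EqvGen.refl _
      · by_cases hx2 : x = b
        · subst hx2
          have : y = a := by rw [← h, hαb]
          subst this
          rw [hra, hrother b hba hbc]
          exact Relation.EqvGen.refl _
        · by_cases hx3 : x = c
          · subst hx3
            have : y = d := h.symm
            subst this
            rw [hrc, hrother d hda hdc]
            exact Relation.EqvGen.refl _
          · by_cases hx4 : x = d
            · subst hx4
              have : y = c := by rw [← h, hαd]
              subst this
              rw [hrc, hrother d hda hdc]
              exact Relation.EqvGen.refl _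
            · have hy1 : y ≠ a := fun hy => hx2 (by rw [hb, ← hy, ← h, hα])
              have hy2 : y ≠ c := fun hy => hx4 (by rw [hd, ← hy, ← h, hα])
              rw [hrother x hx1 hx3, hrother y hy1 hy2]
              refine Relation.EqvGen.rel _ _ (Or.inl (hι ?_))
              rw [hcα _ ?_ ?_, (pre x hx1 hx3).2, (pre y hy1 hy2).2, h]
              · rw [(pre x hx1 hx3).2]; exact hx2
              · rw [(pre x hx1 hx3).2]; exact hx4
    · -- τ-step
      by_cases hx1 : x = a
      · subst hx1
        have : y = c := by rw [← h, hτa]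
        subst this
        rw [hra, hrc]
        exact Relation.EqvGen.rel _ _ hstepbd
      · by_cases hx2 : x = c
        · subst hx2
          have : y = a := by rw [← h, hτc]
          subst this
          rw [hra, hrc]
          exact Relation.EqvGen.symm _ _ (Relation.EqvGen.rel _ _ hstepbd)
        · have hy1 : y ≠ a := fun hy => hx2 (by rw [← hτa, ← hy, ← h, hτ])
          have hy2 : y ≠ c := fun hy => hx1 (by rw [← hτc, ← hy, ← h, hτ])
          rw [hrother x hx1 hx2, hrother y hy1 hy2]
          refine Relation.EqvGen.rel _ _ (Or.inr (hι ?_))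
          rw [hcτ, (pre x hx1 hx2).2, (pre y hy1 hy2).2, h]
  have hrelr : ∀ x y, Relation.EqvGen (mstep α τ) x y →
      (Quotient.mk (mSetoid α' τ') (r x)) = Quotient.mk (mSetoid α' τ') (r y) := by
    intro x y h
    induction h with
    | rel x y h => exact Quotient.sound (hstepr x y h)
    | refl x => rfl
    | symm x y _ ih => exact ih.symm
    | trans x y z _ _ ih1 ih2 => exact ih1.trans ih2
  set F : MComps α τ → MComps α' τ' := Quotient.lift (fun x => Quotient.mk _ (r x)) hrelr
    with hF
  have hstep' : ∀ (x' y' : A'), mstep α' τ' x' y' →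
      (Quotient.mk (mSetoid α τ) (ι x')) = Quotient.mk (mSetoid α τ) (ι y') := by
    intro x' y' h
    rcases h with h | h
    · by_cases h1 : ι x' = b
      · have h2 : ι y' = d := by rw [← h, hcαb _ h1]
        rw [h1, h2]
        calc (Quotient.mk (mSetoid α τ) b) = Quotient.mk (mSetoid α τ) a :=
              mk_eq_of_step (Or.inl hαb)
          _ = Quotient.mk (mSetoid α τ) c := mk_eq_of_step (Or.inr hτa)
          _ = Quotient.mk (mSetoid α τ) d := mk_eq_of_step (Or.inl rfl)
      · by_cases h2 : ι x' = d
        · have h3 : ι y' = b := by rw [← h, hcαd _ h2]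
          rw [h2, h3]
          calc (Quotient.mk (mSetoid α τ) d) = Quotient.mk (mSetoid α τ) c :=
                mk_eq_of_step (Or.inl hαd)
            _ = Quotient.mk (mSetoid α τ) a := mk_eq_of_step (Or.inr hτc)
            _ = Quotient.mk (mSetoid α τ) b := mk_eq_of_step (Or.inl rfl)
        · exact mk_eq_of_step (Or.inl (by rw [← h, hcα _ h1 h2]))
    · exact mk_eq_of_step (Or.inr (by rw [← h, hcτ]))
  have hrel' : ∀ x' y', Relation.EqvGen (mstep α' τ') x' y' →
      (Quotient.mk (mSetoid α τ) (ι x')) = Quotient.mk (mSetoid α τ) (ι y') := by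
    intro x' y' h
    induction h with
    | rel x y h => exact hstep' x y h
    | refl x => rfl
    | symm x y _ ih => exact ih.symm
    | trans x y z _ _ ih1 ih2 => exact ih1.trans ih2
  set G : MComps α' τ' → MComps α τ := Quotient.lift (fun x' => Quotient.mk _ (ι x')) hrel'
    with hG
  have hFG : ∀ t, F (G t) = t := by
    intro t
    induction t using Quotient.ind with
    | _ x' =>
      show Quotient.mk _ (r (ι x')) = _
      rw [hrother (ι x') (hmem x').1 (hmem x').2]
      congr 1
      exact hι (pre (ι x') _ _).2
  have hGF : ∀ s, G (F s) = s := by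
    intro s
    induction s using Quotient.ind with
    | _ x =>
      show Quotient.mk _ (ι (r x)) = _
      by_cases hx1 : x = a
      · subst hx1
        rw [hra, (pre b hba hbc).2]
        exact mk_eq_of_step (Or.inl hαb)
      · by_cases hx2 : x = c
        · subst hx2
          rw [hrc, (pre d hda hdc).2]
          exact mk_eq_of_step (Or.inl hαd)
        · rw [hrother x hx1 hx2, (pre x hx1 hx2).2]
  exact Nat.card_congr ⟨F, G, hGF, hFG⟩

end Contract

end GlueAux

namespace GlueAux

section Extend

variable {A B : Type} [DecidableEq A] [DecidableEq B]

/-- Extend an equivalence between complements of two-point sets. -/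
def extendPair (a c : A) (γ δ : B) (hac : a ≠ c) (hγδ : γ ≠ δ)
    (σ' : {x : A // x ≠ a ∧ x ≠ c} ≃ {y : B // y ≠ γ ∧ y ≠ δ}) : A ≃ B where
  toFun x := if h1 : x = a then γ else if h2 : x = c then δ else (σ' ⟨x, h1, h2⟩).1
  invFun y := if h1 : y = γ then a else if h2 : y = δ then c else (σ'.symm ⟨y, h1, h2⟩).1
  left_inv := by
    intro x
    beta_reduce
    by_cases h1 : x = a
    · subst h1; simp
    · by_cases h2 : x = c
      · subst h2
        rw [dif_neg h1, dif_pos rfl, dif_neg (Ne.symm hγδ), dif_pos rfl]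
      · rw [dif_neg h1, dif_neg h2, dif_neg (σ' ⟨x, h1, h2⟩).2.1,
          dif_neg (σ' ⟨x, h1, h2⟩).2.2]
        simp
  right_inv := by
    intro y
    beta_reduce
    by_cases h1 : y = γ
    · subst h1; simp
    · by_cases h2 : y = δ
      · subst h2
        rw [dif_neg h1, dif_pos rfl, dif_neg (Ne.symm hac), dif_pos rfl]
      · rw [dif_neg h1, dif_neg h2, dif_neg (σ'.symm ⟨y, h1, h2⟩).2.1,
          dif_neg (σ'.symm ⟨y, h1, h2⟩).2.2]
        simp

theorem extendPair_a (a c : A) (γ δ : B) (hac : a ≠ c) (hγδ : γ ≠ δ) (σ') :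
    extendPair a c γ δ hac hγδ σ' a = γ := dif_pos rfl

theorem extendPair_c (a c : A) (γ δ : B) (hac : a ≠ c) (hγδ : γ ≠ δ) (σ') :
    extendPair a c γ δ hac hγδ σ' c = δ := by
  show (if h1 : c = a then γ else if h2 : c = c then δ else _) = δ
  rw [dif_neg (Ne.symm hac), dif_pos rfl]

theorem extendPair_other (a c : A) (γ δ : B) (hac : a ≠ c) (hγδ : γ ≠ δ) (σ')
    (x : A) (h1 : x ≠ a) (h2 : x ≠ c) :
    extendPair a c γ δ hac hγδ σ' x = (σ' ⟨x, h1, h2⟩).1 := by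
  show (if h1 : x = a then γ else if h2 : x = c then δ else _) = _
  rw [dif_neg h1, dif_neg h2]

theorem extendPair_symm_δ (a c : A) (γ δ : B) (hac : a ≠ c) (hγδ : γ ≠ δ) (σ') :
    (extendPair a c γ δ hac hγδ σ').symm δ = c := by
  show (if h1 : δ = γ then a else if h2 : δ = δ then c else _) = c
  rw [dif_neg (Ne.symm hγδ), dif_pos rfl]

theorem extendPair_symm_other (a c : A) (γ δ : B) (hac : a ≠ c) (hγδ : γ ≠ δ) (σ')
    (y : B) (h1 : y ≠ γ) (h2 : y ≠ δ) :
    (extendPair a c γ δ hac hγδ σ').symm y = (σ'.symm ⟨y, h1, h2⟩).1 := by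
  show (if h1 : y = γ then a else if h2 : y = δ then c else _) = _
  rw [dif_neg h1, dif_neg h2]

/-- Restriction of an equivalence to complements of matching two-point sets. -/
def resEq (σ : A ≃ B) (a c : A) (γ δ : B) (h1 : σ a = γ) (h2 : σ c = δ) :
    {x : A // x ≠ a ∧ x ≠ c} ≃ {y : B // y ≠ γ ∧ y ≠ δ} where
  toFun x := ⟨σ x.1, (fun he => x.2.1 (σ.injective (by rw [he, h1]))),
    (fun he => x.2.2 (σ.injective (by rw [he, h2])))⟩
  invFun y := ⟨σ.symm y.1,
    (fun he => y.2.1 (by have h := h1; rw [← he, Equiv.apply_symm_apply] at h; exact h)),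
    (fun he => y.2.2 (by have h := h2; rw [← he, Equiv.apply_symm_apply] at h; exact h))⟩
  left_inv x := by ext; simp
  right_inv y := by ext; simp

end Extend

section Fiber

variable {A B : Type} [DecidableEq A] [DecidableEq B]

variable (β : B → B) (hβf : ∀ y, β y ≠ y) (a c : A) (hca : c ≠ a)

/-- From the data of the image of `a` and an equivalence off the special pairs,
build an equivalence in the fiber. -/
def fiberFun (s : Σ γ : B, ({x : A // x ≠ a ∧ x ≠ c} ≃ {y : B // y ≠ γ ∧ y ≠ β γ})) :
    {σ : A ≃ B // σ.symm (β (σ a)) = c} :=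
  ⟨extendPair a c s.1 (β s.1) (Ne.symm hca) (Ne.symm (hβf s.1)) s.2, by
    rw [extendPair_a]
    rw [Equiv.symm_apply_eq, extendPair_c]⟩

theorem fiberFun_bijective : Function.Bijective (fiberFun β hβf a c hca) := by
  constructor
  · rintro ⟨γ₁, s₁⟩ ⟨γ₂, s₂⟩ h
    have hval : ∀ x : A, extendPair a c γ₁ (β γ₁) (Ne.symm hca) (Ne.symm (hβf γ₁)) s₁ x
        = extendPair a c γ₂ (β γ₂) (Ne.symm hca) (Ne.symm (hβf γ₂)) s₂ x := by
      intro x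
      have := congrArg Subtype.val h
      exact congrFun (congrArg (fun (e : A ≃ B) => (e : A → B)) this) x
    have hγ : γ₁ = γ₂ := by
      have := hval a
      rwa [extendPair_a, extendPair_a] at this
    subst hγ
    have hs : s₁ = s₂ := by
      apply Equiv.ext
      rintro ⟨x, hx1, hx2⟩
      have := hval x
      rw [extendPair_other _ _ _ _ _ _ _ x hx1 hx2,
        extendPair_other _ _ _ _ _ _ _ x hx1 hx2] at this
      exact Subtype.ext this
    rw [hs]
  · rintro ⟨σ, hσ⟩
    have hδ : σ c = β (σ a) := ((Equiv.symm_apply_eq σ).mp hσ).symm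
    refine ⟨⟨σ a, resEq σ a c (σ a) (β (σ a)) rfl hδ⟩, ?_⟩
    apply Subtype.ext
    apply Equiv.ext
    intro x
    show extendPair a c (σ a) (β (σ a)) (Ne.symm hca) (Ne.symm (hβf (σ a)))
      (resEq σ a c (σ a) (β (σ a)) rfl hδ) x = σ x
    by_cases h1 : x = a
    · subst h1
      exact extendPair_a _ _ _ _ _ _ _
    · by_cases h2 : x = c
      · subst h2
        exact (extendPair_c _ _ _ _ _ _ _).trans hδ.symm
      · exact extendPair_other _ _ _ _ _ _ _ x h1 h2

end Fiber

end GlueAux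

namespace GlueAux

section Res

variable {A : Type}

theorem card_ne_two [Fintype A] [DecidableEq A] (a c : A) (h : a ≠ c) :
    Fintype.card {x : A // x ≠ a ∧ x ≠ c} = Fintype.card A - 2 := by
  rw [Fintype.card_subtype]
  rw [show (Finset.univ.filter fun x => x ≠ a ∧ x ≠ c) = Finset.univ \ {a, c} by
    ext x; simp]
  rw [Finset.card_sdiff_of_subset (by simp)]
  rw [Finset.card_pair h, Finset.card_univ]

variable (α : A → A) (hα : ∀ x, α (α x) = x)

/-- Restriction of an involution to the complement of one of its pairs. -/
def resPair (a : A) : {x : A // x ≠ a ∧ x ≠ α a} → {x : A // x ≠ a ∧ x ≠ α a} :=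
  fun x => ⟨α x.1, fun h => x.2.2 (by rw [← hα x.1, h]),
    fun h => x.2.1 (by rw [← hα x.1, h, hα])⟩

theorem resPair_invol (a : A) : ∀ x, resPair α hα a (resPair α hα a x) = x := by
  intro x; apply Subtype.ext; exact hα x.1

theorem resPair_fpf (hαf : ∀ x, α x ≠ x) (a : A) : ∀ x, resPair α hα a x ≠ x := by
  intro x h
  exact hαf x.1 (congrArg Subtype.val h)

/-- Rejoining involution after removing `{a, c}` with `c ∉ {a, α a}`:
the former partners `α a` and `α c` get paired with each other. -/
def resSwap [DecidableEq A] (a c : A) (hca : c ≠ a) (hcb : c ≠ α a) (hαf : ∀ x, α x ≠ x) :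
    {x : A // x ≠ a ∧ x ≠ c} → {x : A // x ≠ a ∧ x ≠ c} := fun x =>
  if h1 : x.1 = α a then ⟨α c, fun h => hcb (by rw [← hα c, h]), fun h => hαf c h⟩
  else if h2 : x.1 = α c then ⟨α a, fun h => hαf a h, fun h => hcb h.symm⟩
  else ⟨α x.1, fun h => h1 (by rw [← hα x.1, h]), fun h => h2 (by rw [← hα x.1, h])⟩

variable [DecidableEq A] (a c : A) (hca : c ≠ a) (hcb : c ≠ α a) (hαf : ∀ x, α x ≠ x)

theorem resSwap_b (x) (h : x.1 = α a) : (resSwap α hα a c hca hcb hαf x).1 = α c := by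
  rw [resSwap, dif_pos h]

theorem resSwap_d (x) (h1 : x.1 ≠ α a) (h2 : x.1 = α c) :
    (resSwap α hα a c hca hcb hαf x).1 = α a := by
  rw [resSwap, dif_neg h1, dif_pos h2]

theorem resSwap_other (x) (h1 : x.1 ≠ α a) (h2 : x.1 ≠ α c) :
    (resSwap α hα a c hca hcb hαf x).1 = α x.1 := by
  rw [resSwap, dif_neg h1, dif_neg h2]

theorem resSwap_invol : ∀ x, resSwap α hα a c hca hcb hαf (resSwap α hα a c hca hcb hαf x) = x := by
  have hacne : α c ≠ α a := fun h => hca (by rw [← hα c, h, hα])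
  intro x
  apply Subtype.ext
  by_cases h1 : x.1 = α a
  · have e1 := resSwap_b α hα a c hca hcb hαf x h1
    rw [resSwap_d α hα a c hca hcb hαf _ (by rw [e1]; exact hacne) (by rw [e1]), h1]
  · by_cases h2 : x.1 = α c
    · have e1 := resSwap_d α hα a c hca hcb hαf x h1 h2
      rw [resSwap_b α hα a c hca hcb hαf _ (by rw [e1]), h2]
    · have e1 := resSwap_other α hα a c hca hcb hαf x h1 h2
      have k1 : α x.1 ≠ α a := fun h => x.2.1 (by rw [← hα x.1, h, hα])
      have k2 : α x.1 ≠ α c := fun h => x.2.2 (by rw [← hα x.1, h, hα])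
      rw [resSwap_other α hα a c hca hcb hαf _ (by rw [e1]; exact k1) (by rw [e1]; exact k2),
        e1, hα]

theorem resSwap_fpf : ∀ x, resSwap α hα a c hca hcb hαf x ≠ x := by
  intro x h
  replace h := congrArg Subtype.val h
  by_cases h1 : x.1 = α a
  · rw [resSwap_b α hα a c hca hcb hαf x h1, h1] at h
    exact hca (by rw [← hα c, h, hα])
  · by_cases h2 : x.1 = α c
    · rw [resSwap_d α hα a c hca hcb hαf x h1 h2, h2] at h
      exact hca (by rw [← hα c, ← h, hα])
    · rw [resSwap_other α hα a c hca hcb hαf x h1 h2] at h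
      exact hαf x.1 h

end Res

end GlueAux

namespace GlueAux

section FiberCount

variable {A B : Type} [Fintype A] [DecidableEq A] [DecidableEq B]
variable (α : A → A) (β : B → B)
variable (hα : ∀ x, α (α x) = x) (hαf : ∀ x, α x ≠ x)
variable (hβ : ∀ y, β (β y) = y) (hβf : ∀ y, β y ≠ y)

theorem pull_res_val (a c : A) (hac : a ≠ c) (γ : B)
    (σ' : {x : A // x ≠ a ∧ x ≠ c} ≃ {y : B // y ≠ γ ∧ y ≠ β γ})
    (x' : {x : A // x ≠ a ∧ x ≠ c}) :
    (σ'.symm (resPair β hβ γ (σ' x'))).1 =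
      (extendPair a c γ (β γ) hac (Ne.symm (hβf γ)) σ').symm
        (β (extendPair a c γ (β γ) hac (Ne.symm (hβf γ)) σ' x'.1)) := by
  rw [extendPair_other a c γ (β γ) hac (Ne.symm (hβf γ)) σ' x'.1 x'.2.1 x'.2.2]
  have h1 : β (σ' x').1 ≠ γ := fun h => (σ' x').2.2 (by rw [← hβ (σ' x').1, h])
  have h2 : β (σ' x').1 ≠ β γ := fun h => (σ' x').2.1 (by rw [← hβ (σ' x').1, h, hβ])
  rw [extendPair_symm_other a c γ (β γ) hac (Ne.symm (hβf γ)) σ' _ h1 h2]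
  rfl

/-- Closed case: `σ⁻¹βσ a = α a`. -/
theorem mcount_fiber_closed (a : A) (γ : B)
    (σ' : {x : A // x ≠ a ∧ x ≠ α a} ≃ {y : B // y ≠ γ ∧ y ≠ β γ}) :
    mcount α (fun x =>
        (extendPair a (α a) γ (β γ) (Ne.symm (hαf a)) (Ne.symm (hβf γ)) σ').symm
          (β (extendPair a (α a) γ (β γ) (Ne.symm (hαf a)) (Ne.symm (hβf γ)) σ' x))) =
      mcount (resPair α hα a) (fun x => σ'.symm (resPair β hβ γ (σ' x))) + 1 := by
  set σ := extendPair a (α a) γ (β γ) (Ne.symm (hαf a)) (Ne.symm (hβf γ)) σ' with hσ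
  refine mcount_pair (Subtype.val)
    α (fun x => σ.symm (β (σ x))) (resPair α hα a) (fun x => σ'.symm (resPair β hβ γ (σ' x)))
    Subtype.val_injective hα (by intro x; simp [hβ]) a (α a) (Ne.symm (hαf a)) rfl ?_
    (fun x h1 h2 => ⟨⟨x, h1, h2⟩, rfl⟩) (fun x' => x'.2) (fun x' => rfl) ?_
  · beta_reduce
    rw [extendPair_a, Equiv.symm_apply_eq, extendPair_c]
  · intro x'
    exact pull_res_val β hβ hβf a (α a) (Ne.symm (hαf a)) γ σ' x'

/-- Open case: `σ⁻¹βσ a = c ∉ {a, α a}`. -/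
theorem mcount_fiber_open (a c : A) (hca : c ≠ a) (hcb : c ≠ α a) (γ : B)
    (σ' : {x : A // x ≠ a ∧ x ≠ c} ≃ {y : B // y ≠ γ ∧ y ≠ β γ}) :
    mcount α (fun x =>
        (extendPair a c γ (β γ) (Ne.symm hca) (Ne.symm (hβf γ)) σ').symm
          (β (extendPair a c γ (β γ) (Ne.symm hca) (Ne.symm (hβf γ)) σ' x))) =
      mcount (resSwap α hα a c hca hcb hαf) (fun x => σ'.symm (resPair β hβ γ (σ' x))) := by
  set σ := extendPair a c γ (β γ) (Ne.symm hca) (Ne.symm (hβf γ)) σ' with hσ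
  have hacαne : ∀ x', (x' : {x : A // x ≠ a ∧ x ≠ c}).1 = α c → x'.1 ≠ α a := by
    intro x' h2 h1
    exact hca (by rw [← hα c, ← h2, h1, hα])
  refine mcount_contract (Subtype.val)
    α (fun x => σ.symm (β (σ x))) (resSwap α hα a c hca hcb hαf)
    (fun x => σ'.symm (resPair β hβ γ (σ' x)))
    Subtype.val_injective hα (by intro x; simp [hβ]) hαf a c ?_ hca hcb
    (fun x h1 h2 => ⟨⟨x, h1, h2⟩, rfl⟩) (fun x' => x'.2)
    (fun x' h1 h2 => resSwap_other α hα a c hca hcb hαf x' h1 h2)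
    (fun x' h1 => resSwap_b α hα a c hca hcb hαf x' h1)
    (fun x' h2 => resSwap_d α hα a c hca hcb hαf x' (hacαne x' h2) h2) ?_
  · beta_reduce
    rw [extendPair_a, Equiv.symm_apply_eq, extendPair_c]
  · intro x'
    exact pull_res_val β hβ hβf a c (Ne.symm hca) γ σ' x'

end FiberCount

end GlueAux

namespace GlueAux

/-- The key combinatorial identity: the sum over all bijections between two
`2p`-element sets carrying fixed-point-free involutions of `X` to the number of
joint components is `2^p p! ∏ (X + 2j)`. -/
theorem sum_equiv_pow (p : ℕ) :
    ∀ (A B : Type) [Fintype A] [Fintype B] [DecidableEq A] [DecidableEq B]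
      (α : A → A) (β : B → B),
      (∀ x, α (α x) = x) → (∀ x, α x ≠ x) → (∀ y, β (β y) = y) → (∀ y, β y ≠ y) →
      Fintype.card A = 2 * p → Fintype.card B = 2 * p →
      ∑ σ : A ≃ B, (Polynomial.X : Polynomial ℤ) ^ mcount α (fun x => σ.symm (β (σ x)))
        = Polynomial.C ((2 ^ p * p.factorial : ℕ) : ℤ) *
            ∏ j ∈ Finset.range p, (Polynomial.X + Polynomial.C (2 * (j : ℤ))) := by
  induction p with
  | zero =>
    intro A B _ _ _ _ α β hα hαf hβ hβf hA hB
    haveI : IsEmpty A := Fintype.card_eq_zero_iff.mp (by omega)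
    haveI : IsEmpty B := Fintype.card_eq_zero_iff.mp (by omega)
    haveI : Unique (A ≃ B) :=
      ⟨⟨Equiv.equivOfIsEmpty A B⟩, fun σ => Equiv.ext fun x => (IsEmpty.false x).elim⟩
    rw [Fintype.sum_unique]
    haveI : IsEmpty (MComps α (fun x =>
        (default : A ≃ B).symm (β ((default : A ≃ B) x)))) := by
      constructor
      intro q
      induction q using Quotient.ind with
      | _ x => exact (IsEmpty.false x).elim
    rw [show mcount α (fun x => (default : A ≃ B).symm (β ((default : A ≃ B) x))) = 0 from
      Nat.card_of_isEmpty]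
    simp
  | succ p ih =>
    intro A B _ _ _ _ α β hα hαf hβ hβf hA hB
    obtain ⟨a⟩ := Fintype.card_pos_iff.mp (show 0 < Fintype.card A by omega)
    rw [← Fintype.sum_fiberwise (fun σ : A ≃ B => σ.symm (β (σ a)))
        (fun σ => (Polynomial.X : Polynomial ℤ) ^ mcount α (fun x => σ.symm (β (σ x))))]
    have hfib : ∀ (c : A) (hca : c ≠ a),
        (∑ σ : {σ : A ≃ B // σ.symm (β (σ a)) = c},
          (Polynomial.X : Polynomial ℤ) ^ mcount α (fun x => σ.1.symm (β (σ.1 x)))) =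
        ∑ γ : B, ∑ σ' : ({x : A // x ≠ a ∧ x ≠ c} ≃ {y : B // y ≠ γ ∧ y ≠ β γ}),
          (Polynomial.X : Polynomial ℤ) ^ mcount α (fun x =>
            (extendPair a c γ (β γ) (Ne.symm hca) (Ne.symm (hβf γ)) σ').symm
              (β (extendPair a c γ (β γ) (Ne.symm hca) (Ne.symm (hβf γ)) σ' x))) := by
      intro c hca
      rw [← Fintype.sum_bijective (fiberFun β hβf a c hca) (fiberFun_bijective β hβf a c hca)
        _ (fun σ => (Polynomial.X : Polynomial ℤ) ^ mcount α (fun x => σ.1.symm (β (σ.1 x))))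
        (fun s => rfl)]
      rw [← Finset.univ_sigma_univ, Finset.sum_sigma]
      rfl
    have hcA : ∀ c : A, c ≠ a → Fintype.card {x : A // x ≠ a ∧ x ≠ c} = 2 * p := by
      intro c hca
      rw [card_ne_two a c (Ne.symm hca), hA]; omega
    have hcB : ∀ γ : B, Fintype.card {y : B // y ≠ γ ∧ y ≠ β γ} = 2 * p := by
      intro γ
      rw [card_ne_two γ (β γ) (Ne.symm (hβf γ)), hB]; omega
    set P : Polynomial ℤ :=
        ∏ j ∈ Finset.range p, (Polynomial.X + Polynomial.C (2 * (j : ℤ))) with hP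
    set Q : Polynomial ℤ := Polynomial.C ((2 ^ p * p.factorial : ℕ) : ℤ) * P with hQ
    -- closed fiber
    have hSb : (∑ σ : {σ : A ≃ B // σ.symm (β (σ a)) = α a},
          (Polynomial.X : Polynomial ℤ) ^ mcount α (fun x => σ.1.symm (β (σ.1 x)))) =
        (Fintype.card B) • (Polynomial.X * Q) := by
      have hinner : ∀ γ : B,
          (∑ σ' : ({x : A // x ≠ a ∧ x ≠ α a} ≃ {y : B // y ≠ γ ∧ y ≠ β γ}),
            (Polynomial.X : Polynomial ℤ) ^ mcount α (fun x =>
              (extendPair a (α a) γ (β γ) (Ne.symm (hαf a)) (Ne.symm (hβf γ)) σ').symm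
                (β (extendPair a (α a) γ (β γ) (Ne.symm (hαf a)) (Ne.symm (hβf γ)) σ' x)))) =
          Polynomial.X * Q := by
        intro γ
        have h1 : ∀ σ' : ({x : A // x ≠ a ∧ x ≠ α a} ≃ {y : B // y ≠ γ ∧ y ≠ β γ}),
            (Polynomial.X : Polynomial ℤ) ^ mcount α (fun x =>
              (extendPair a (α a) γ (β γ) (Ne.symm (hαf a)) (Ne.symm (hβf γ)) σ').symm
                (β (extendPair a (α a) γ (β γ) (Ne.symm (hαf a)) (Ne.symm (hβf γ)) σ' x))) =
            (Polynomial.X : Polynomial ℤ) ^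
              mcount (resPair α hα a) (fun x => σ'.symm (resPair β hβ γ (σ' x))) *
              Polynomial.X := by
          intro σ'
          rw [mcount_fiber_closed α β hα hαf hβ hβf a γ σ', pow_succ]
        rw [Finset.sum_congr rfl (fun σ' _ => h1 σ'), ← Finset.sum_mul,
          ih _ _ (resPair α hα a) (resPair β hβ γ) (resPair_invol α hα a)
            (resPair_fpf α hα hαf a) (resPair_invol β hβ γ) (resPair_fpf β hβ hβf γ)
            (hcA (α a) (hαf a)) (hcB γ)]
        ring
      rw [hfib (α a) (hαf a), Finset.sum_congr rfl (fun γ _ => hinner γ),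
        Finset.sum_const, Finset.card_univ]
    -- open fibers
    have hSc : ∀ (c : A), c ≠ a → c ≠ α a →
        (∑ σ : {σ : A ≃ B // σ.symm (β (σ a)) = c},
          (Polynomial.X : Polynomial ℤ) ^ mcount α (fun x => σ.1.symm (β (σ.1 x)))) =
        (Fintype.card B) • Q := by
      intro c hca hcb
      have hinner : ∀ γ : B,
          (∑ σ' : ({x : A // x ≠ a ∧ x ≠ c} ≃ {y : B // y ≠ γ ∧ y ≠ β γ}),
            (Polynomial.X : Polynomial ℤ) ^ mcount α (fun x =>
              (extendPair a c γ (β γ) (Ne.symm hca) (Ne.symm (hβf γ)) σ').symm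
                (β (extendPair a c γ (β γ) (Ne.symm hca) (Ne.symm (hβf γ)) σ' x)))) = Q := by
        intro γ
        have h1 : ∀ σ' : ({x : A // x ≠ a ∧ x ≠ c} ≃ {y : B // y ≠ γ ∧ y ≠ β γ}),
            (Polynomial.X : Polynomial ℤ) ^ mcount α (fun x =>
              (extendPair a c γ (β γ) (Ne.symm hca) (Ne.symm (hβf γ)) σ').symm
                (β (extendPair a c γ (β γ) (Ne.symm hca) (Ne.symm (hβf γ)) σ' x))) =
            (Polynomial.X : Polynomial ℤ) ^
              mcount (resSwap α hα a c hca hcb hαf)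
                (fun x => σ'.symm (resPair β hβ γ (σ' x))) := by
          intro σ'
          rw [mcount_fiber_open α β hα hαf hβ hβf a c hca hcb γ σ']
        rw [Finset.sum_congr rfl (fun σ' _ => h1 σ'),
          ih _ _ (resSwap α hα a c hca hcb hαf) (resPair β hβ γ)
            (resSwap_invol α hα a c hca hcb hαf) (resSwap_fpf α hα a c hca hcb hαf)
            (resPair_invol β hβ γ) (resPair_fpf β hβ hβf γ) (hcA c hca) (hcB γ)]
      rw [hfib c hca, Finset.sum_congr rfl (fun γ _ => hinner γ),
        Finset.sum_const, Finset.card_univ]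
    -- empty fiber at c = a
    have hSa : (∑ σ : {σ : A ≃ B // σ.symm (β (σ a)) = a},
          (Polynomial.X : Polynomial ℤ) ^ mcount α (fun x => σ.1.symm (β (σ.1 x)))) = 0 := by
      haveI : IsEmpty {σ : A ≃ B // σ.symm (β (σ a)) = a} := by
        constructor
        rintro ⟨σ, hσ⟩
        rw [Equiv.symm_apply_eq] at hσ
        exact hβf (σ a) hσ
      rw [Finset.univ_eq_empty, Finset.sum_empty]
    -- assemble
    have hsub : ({a, α a} : Finset A) ⊆ Finset.univ := Finset.subset_univ _
    rw [← Finset.sum_sdiff hsub]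
    have hpair : (∑ c ∈ ({a, α a} : Finset A),
        ∑ σ : {σ : A ≃ B // σ.symm (β (σ a)) = c},
          (Polynomial.X : Polynomial ℤ) ^ mcount α (fun x => σ.1.symm (β (σ.1 x)))) =
        (Fintype.card B) • (Polynomial.X * Q) := by
      rw [Finset.sum_pair (Ne.symm (hαf a)), hSa, hSb, zero_add]
    have hrest : (∑ c ∈ (Finset.univ \ ({a, α a} : Finset A)),
        ∑ σ : {σ : A ≃ B // σ.symm (β (σ a)) = c},
          (Polynomial.X : Polynomial ℤ) ^ mcount α (fun x => σ.1.symm (β (σ.1 x)))) =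
        (2 * p) • ((Fintype.card B) • Q) := by
      have hmem : ∀ c ∈ Finset.univ \ ({a, α a} : Finset A), c ≠ a ∧ c ≠ α a := by
        intro c hc
        rw [Finset.mem_sdiff, Finset.mem_insert, Finset.mem_singleton] at hc
        push_neg at hc
        exact hc.2
      rw [Finset.sum_congr rfl (fun c hc => hSc c (hmem c hc).1 (hmem c hc).2),
        Finset.sum_const]
      have hcard : (Finset.univ \ ({a, α a} : Finset A)).card = 2 * p := by
        rw [Finset.card_sdiff_of_subset hsub, Finset.card_pair (Ne.symm (hαf a)), Finset.card_univ, hA]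
        omega
      rw [hcard]
    rw [hpair, hrest]
    -- final polynomial algebra
    rw [hB, Finset.prod_range_succ, ← hP]
    have hm : ((2 ^ (p + 1) * (p + 1).factorial : ℕ) : ℤ) =
        ((2 * (p + 1) : ℕ) : ℤ) * ((2 ^ p * p.factorial : ℕ) : ℤ) := by
      push_cast [Nat.factorial_succ]; ring
    rw [hm, map_mul, hQ]
    simp only [nsmul_eq_mul]
    simp only [← Polynomial.C_eq_natCast]
    rw [show ((2 * p : ℕ) : ℤ) = 2 * (p : ℤ) by push_cast; ring]
    rw [show ((2 * (p + 1) : ℕ) : ℤ) = 2 * ((p : ℤ) + 1) by push_cast; ring]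
    ring

end GlueAux

namespace GlueAux

section Partner

variable (G : HGraph) (D : G.Decomp)

/-- One step of the walk along a decomposition: follow the edge, then the pairing. -/
def uFun : G.H → G.H := fun z => D.1 (G.edg z)

/-- The inverse step. -/
def vFun : G.H → G.H := fun z => G.edg (D.1 z)

theorem vu (z : G.H) : vFun G D (uFun G D z) = z := by
  rw [uFun, vFun, D.2.1, G.edg_invol]

theorem uv (z : G.H) : uFun G D (vFun G D z) = z := by
  rw [uFun, vFun, G.edg_invol, D.2.1]

theorem vu_iter (k : ℕ) (w : G.H) : (vFun G D)^[k] ((uFun G D)^[k] w) = w := by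
  induction k generalizing w with
  | zero => rfl
  | succ k ih =>
    rw [Function.iterate_succ_apply (uFun G D), Function.iterate_succ_apply' (vFun G D)]
    rw [ih (uFun G D w), vu]

theorem uv_iter (k : ℕ) (w : G.H) : (uFun G D)^[k] ((vFun G D)^[k] w) = w := by
  induction k generalizing w with
  | zero => rfl
  | succ k ih =>
    rw [Function.iterate_succ_apply (vFun G D), Function.iterate_succ_apply' (uFun G D)]
    rw [ih (vFun G D w), uv]

/-- The walk step as a permutation. -/
def uPerm : Equiv.Perm G.H := ⟨uFun G D, vFun G D, vu G D, uv G D⟩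

theorem u_iterate_eq (n : ℕ) (z : G.H) : (uFun G D)^[n] z = ((uPerm G D) ^ n) z := by
  induction n generalizing z with
  | zero => simp
  | succ n ih =>
    rw [Function.iterate_succ_apply (uFun G D), pow_succ, Equiv.Perm.mul_apply]
    exact ih (uFun G D z)

theorem mem_periodicPts (z : G.H) : z ∈ Function.periodicPts (uFun G D) := by
  refine ⟨orderOf (uPerm G D), orderOf_pos _, ?_⟩
  show (uFun G D)^[orderOf (uPerm G D)] z = z
  rw [u_iterate_eq, pow_orderOf_eq_one]
  rfl

theorem edg_u_iter {x : G.H} (hx : G.edg x = x) (k : ℕ) :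
    G.edg ((uFun G D)^[k] x) = (vFun G D)^[k] x := by
  induction k with
  | zero => exact hx
  | succ k ih =>
    rw [Function.iterate_succ_apply' (uFun G D), Function.iterate_succ_apply' (vFun G D)]
    show G.edg (D.1 (G.edg ((uFun G D)^[k] x))) = _
    rw [ih]
    rfl

theorem ext_iff_double {x : G.H} (hx : G.edg x = x) (k : ℕ) :
    G.edg ((uFun G D)^[k] x) = (uFun G D)^[k] x ↔ (uFun G D)^[k + k] x = x := by
  rw [edg_u_iter G D hx]
  constructor
  · intro h
    have := congrArg ((uFun G D)^[k]) h
    rw [uv_iter] at this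
    rw [Function.iterate_add_apply, ← this]
  · intro h
    conv_lhs => rw [← h, Function.iterate_add_apply, vu_iter]

theorem minimalPeriod_even {x : G.H} (hx : G.edg x = x) :
    Even (Function.minimalPeriod (uFun G D) x) := by
  set n := Function.minimalPeriod (uFun G D) x with hn
  have hux : (uFun G D)^[n] x = x := Function.iterate_minimalPeriod
  by_contra hodd
  obtain ⟨k, hk⟩ := Nat.not_even_iff_odd.mp hodd
  -- d fixes u^[k+1] x
  have h1 : (uFun G D)^[k + 1] x = (vFun G D)^[k] x := by
    have h2 : (uFun G D)^[k] ((uFun G D)^[k + 1] x) = x := by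
      rw [← Function.iterate_add_apply]
      rw [show k + (k + 1) = n from by omega]
      exact hux
    conv_rhs => rw [← h2, vu_iter]
  have h3 : D.1 ((uFun G D)^[k + 1] x) = (uFun G D)^[k + 1] x := by
    conv_lhs =>
      rw [Function.iterate_succ_apply' (uFun G D)]
    show D.1 (D.1 (G.edg ((uFun G D)^[k] x))) = _
    rw [D.2.1, edg_u_iter G D hx, ← h1]
  exact D.2.2.1 _ h3

/-- The endpoint partner of an external half-edge: walk halfway around the
`u`-orbit. -/
noncomputable def partnerVal (x : G.H) : G.H :=
  (uFun G D)^[Function.minimalPeriod (uFun G D) x / 2] x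

theorem partnerVal_spec {x : G.H} (hx : G.edg x = x) :
    G.edg (partnerVal G D x) = partnerVal G D x ∧ partnerVal G D x ≠ x ∧
      partnerVal G D (partnerVal G D x) = x := by
  set n := Function.minimalPeriod (uFun G D) x with hn
  have hnpos : 0 < n :=
    Function.minimalPeriod_pos_of_mem_periodicPts (mem_periodicPts G D x)
  have hux : (uFun G D)^[n] x = x := Function.iterate_minimalPeriod
  obtain ⟨m, hm⟩ := minimalPeriod_even G D hx
  have hm2 : n / 2 = m := by omega
  have hmpos : 0 < m := by omega
  have hval : partnerVal G D x = (uFun G D)^[m] x := by rw [partnerVal, ← hn, hm2]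
  refine ⟨?_, ?_, ?_⟩
  · rw [hval, ext_iff_double G D hx m, show m + m = n from hm.symm]
    exact hux
  · rw [hval]
    intro h
    have : n ∣ m := Function.IsPeriodicPt.minimalPeriod_dvd h
    have := Nat.le_of_dvd hmpos this
    omega
  · have hper2 : Function.minimalPeriod (uFun G D) (partnerVal G D x) = n := by
      rw [hval, Function.minimalPeriod_apply_iterate (mem_periodicPts G D x) m]
    rw [partnerVal, hper2, hm2, hval, ← Function.iterate_add_apply,
      show m + m = n from hm.symm]
    exact hux

theorem rel_u_iter (k : ℕ) (z : G.H) :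
    Relation.EqvGen (G.dstep D) z ((uFun G D)^[k] z) := by
  induction k with
  | zero => exact Relation.EqvGen.refl z
  | succ k ih =>
    refine Relation.EqvGen.trans _ _ _ ih ?_
    rw [Function.iterate_succ_apply' (uFun G D)]
    set w := (uFun G D)^[k] z
    refine Relation.EqvGen.trans _ _ _
      (Relation.EqvGen.rel w (G.edg w) (Or.inl rfl)) ?_
    exact Relation.EqvGen.rel _ _ (Or.inr rfl)

theorem rel_partner {x : G.H} (hx : G.edg x = x) :
    Relation.EqvGen (G.dstep D) x (partnerVal G D x) := by
  rw [partnerVal]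
  exact rel_u_iter G D _ x

/-- Every element related to an external half-edge lies on its `u`-orbit. -/
theorem orbit_of_rel {x : G.H} (hx : G.edg x = x) :
    ∀ z w : G.H, Relation.EqvGen (G.dstep D) z w →
      ((∃ k, (uFun G D)^[k] x = z) ↔ (∃ k, (uFun G D)^[k] x = w)) := by
  have hnpos : 0 < Function.minimalPeriod (uFun G D) x :=
    Function.minimalPeriod_pos_of_mem_periodicPts (mem_periodicPts G D x)
  have hux : (uFun G D)^[Function.minimalPeriod (uFun G D) x] x = x :=
    Function.iterate_minimalPeriod
  set n := Function.minimalPeriod (uFun G D) x with hn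
  -- closure of the orbit under the edge involution
  have hecl : ∀ k, ∃ j, (uFun G D)^[j] x = G.edg ((uFun G D)^[k] x) := by
    intro k
    refine ⟨n * k - k, ?_⟩
    have hnk : (uFun G D)^[n * k] x = x :=
      (Function.IsPeriodicPt.mul_const hux k)
    have hle : k ≤ n * k := Nat.le_mul_of_pos_left k hnpos
    rw [edg_u_iter G D hx]
    have : (uFun G D)^[k + (n * k - k)] x = x := by
      rw [Nat.add_sub_cancel' hle]; exact hnk
    conv_rhs => rw [← this, Function.iterate_add_apply, vu_iter]
  -- closure under the decomposition pairing
  have hdcl : ∀ k, ∃ j, (uFun G D)^[j] x = D.1 ((uFun G D)^[k] x) := by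
    intro k
    cases k with
    | zero =>
      exact ⟨1, by simp [uFun, hx]⟩
    | succ k =>
      obtain ⟨j, hj⟩ := hecl k
      refine ⟨j, ?_⟩
      rw [Function.iterate_succ_apply' (uFun G D)]
      show _ = D.1 (D.1 (G.edg ((uFun G D)^[k] x)))
      rw [D.2.1]
      exact hj
  intro z w hzw
  induction hzw with
  | rel z w h =>
    constructor
    · rintro ⟨k, rfl⟩
      rcases h with h | h
      · obtain ⟨j, hj⟩ := hecl k
        exact ⟨j, by rw [hj, h]⟩
      · obtain ⟨j, hj⟩ := hdcl k
        exact ⟨j, by rw [hj, h]⟩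
    · rintro ⟨k, rfl⟩
      rcases h with h | h
      · have hz : z = G.edg ((uFun G D)^[k] x) := by rw [← h, G.edg_invol]
        obtain ⟨j, hj⟩ := hecl k
        exact ⟨j, by rw [hj, hz]⟩
      · have hz : z = D.1 ((uFun G D)^[k] x) := by rw [← h, D.2.1]
        obtain ⟨j, hj⟩ := hdcl k
        exact ⟨j, by rw [hj, hz]⟩
  | refl z => exact Iff.rfl
  | symm z w _ ih => exact ih.symm
  | trans z w v _ _ ih1 ih2 => exact ih1.trans ih2

theorem partner_uniqueVal {x y : G.H} (hx : G.edg x = x) (hy : G.edg y = y)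
    (hrel : Relation.EqvGen (G.dstep D) x y) :
    y = x ∨ y = partnerVal G D x := by
  have hnpos : 0 < Function.minimalPeriod (uFun G D) x :=
    Function.minimalPeriod_pos_of_mem_periodicPts (mem_periodicPts G D x)
  have hux : (uFun G D)^[Function.minimalPeriod (uFun G D) x] x = x :=
    Function.iterate_minimalPeriod
  set n := Function.minimalPeriod (uFun G D) x with hn
  obtain ⟨m, hm⟩ := minimalPeriod_even G D hx
  rw [← hn] at hm
  have hm2 : n / 2 = m := by omega
  have hval : partnerVal G D x = (uFun G D)^[m] x := by rw [partnerVal, ← hn, hm2]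
  obtain ⟨k, hk⟩ := (orbit_of_rel G D hx x y hrel).mp ⟨0, rfl⟩
  subst hk
  have h2k : (uFun G D)^[k + k] x = x := (ext_iff_double G D hx k).mp hy
  have hdvd : n ∣ k + k := Function.IsPeriodicPt.minimalPeriod_dvd h2k
  have hmk : m ∣ k := by
    obtain ⟨t, ht⟩ := hdvd
    rw [hm] at ht
    have hdist : (m + m) * t = m * t + m * t := by ring
    exact ⟨t, by omega⟩
  obtain ⟨t, ht⟩ := hmk
  rcases Nat.even_or_odd t with ⟨s, hs⟩ | ⟨s, hs⟩
  · left
    rw [ht, hs, show m * (s + s) = n * s from by rw [hm]; ring]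
    exact Function.IsPeriodicPt.mul_const hux s
  · right
    rw [ht, hs, show m * (2 * s + 1) = m + n * s from by rw [hm]; ring,
      Function.iterate_add_apply, Function.IsPeriodicPt.mul_const hux s, hval]

/-- The partner involution on external half-edges. -/
noncomputable def partner : {h : G.H // G.IsExternal h} → {h : G.H // G.IsExternal h} :=
  fun x => ⟨partnerVal G D x.1, (partnerVal_spec G D x.2).1⟩

theorem partner_invol (x) : partner G D (partner G D x) = x :=
  Subtype.ext (partnerVal_spec G D x.2).2.2

theorem partner_fpf (x) : partner G D x ≠ x := by
  intro h
  exact (partnerVal_spec G D x.2).2.1 (congrArg Subtype.val h)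

theorem partner_rel (x : {h : G.H // G.IsExternal h}) :
    Relation.EqvGen (G.dstep D) x.1 (partner G D x).1 :=
  rel_partner G D x.2

theorem partner_unique (x y : {h : G.H // G.IsExternal h})
    (hrel : Relation.EqvGen (G.dstep D) x.1 y.1) :
    y = x ∨ y = partner G D x := by
  rcases partner_uniqueVal G D x.2 y.2 hrel with h | h
  · exact Or.inl (Subtype.ext h)
  · exact Or.inr (Subtype.ext h)

end Partner

end GlueAux

namespace GlueAux

section GlueDecomp

variable (g₁ g₂ : HGraph)
variable (σ : {h : g₁.H // g₁.IsExternal h} ≃ {h : g₂.H // g₂.IsExternal h})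

/-- The decomposition of a glued graph built from decompositions of the pieces. -/
def glueDecomp (d₁ : g₁.Decomp) (d₂ : g₂.Decomp) : (HGraph.glue g₁ g₂ σ).Decomp := by
  refine ⟨Sum.map d₁.1 d₂.1, ?_, ?_, ?_⟩
  · rintro (h | h)
    · exact congrArg Sum.inl (d₁.2.1 h)
    · exact congrArg Sum.inr (d₂.2.1 h)
  · rintro (h | h)
    · intro hcon
      exact d₁.2.2.1 h (Sum.inl_injective hcon)
    · intro hcon
      exact d₂.2.2.1 h (Sum.inr_injective hcon)
  · rintro (h | h)
    · exact congrArg Sum.inl (d₁.2.2.2 h)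
    · exact congrArg Sum.inr (d₂.2.2.2 h)

theorem glue_decomp_inl (D : (HGraph.glue g₁ g₂ σ).Decomp) (h : g₁.H) :
    ∃ y, D.1 (Sum.inl h) = Sum.inl y := by
  have hv := D.2.2.2 (Sum.inl h)
  cases hh : D.1 (Sum.inl h) with
  | inl y => exact ⟨y, rfl⟩
  | inr z =>
    rw [hh] at hv
    exact absurd hv (by simp [HGraph.glue])

theorem glue_decomp_inr (D : (HGraph.glue g₁ g₂ σ).Decomp) (h : g₂.H) :
    ∃ y, D.1 (Sum.inr h) = Sum.inr y := by
  have hv := D.2.2.2 (Sum.inr h)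
  cases hh : D.1 (Sum.inr h) with
  | inr y => exact ⟨y, rfl⟩
  | inl z =>
    rw [hh] at hv
    exact absurd hv (by simp [HGraph.glue])

/-- Decompositions of a glued graph are pairs of decompositions. -/
noncomputable def decompEquiv : (HGraph.glue g₁ g₂ σ).Decomp ≃ g₁.Decomp × g₂.Decomp where
  toFun D :=
    ⟨⟨fun h => (glue_decomp_inl g₁ g₂ σ D h).choose, by
        have hspec : ∀ h, D.1 (Sum.inl h) = Sum.inl (glue_decomp_inl g₁ g₂ σ D h).choose :=
          fun h => (glue_decomp_inl g₁ g₂ σ D h).choose_spec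
        refine ⟨?_, ?_, ?_⟩
        · intro h
          apply Sum.inl_injective
          rw [← hspec, ← hspec]; exact D.2.1 _
        · intro h hcon
          apply D.2.2.1 (Sum.inl h)
          rw [hspec]
          exact congrArg Sum.inl hcon
        · intro h
          apply Sum.inl_injective
          have := D.2.2.2 (Sum.inl h)
          rw [hspec] at this
          exact this⟩,
      ⟨fun h => (glue_decomp_inr g₁ g₂ σ D h).choose, by
        have hspec : ∀ h, D.1 (Sum.inr h) = Sum.inr (glue_decomp_inr g₁ g₂ σ D h).choose :=
          fun h => (glue_decomp_inr g₁ g₂ σ D h).choose_spec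
        refine ⟨?_, ?_, ?_⟩
        · intro h
          apply Sum.inr_injective
          rw [← hspec, ← hspec]; exact D.2.1 _
        · intro h hcon
          apply D.2.2.1 (Sum.inr h)
          rw [hspec]
          exact congrArg Sum.inr hcon
        · intro h
          apply Sum.inr_injective
          have := D.2.2.2 (Sum.inr h)
          rw [hspec] at this
          exact this⟩⟩
  invFun p := glueDecomp g₁ g₂ σ p.1 p.2
  left_inv := by
    intro D
    apply Subtype.ext
    funext z
    cases z with
    | inl h =>
      show Sum.inl _ = D.1 (Sum.inl h)
      exact ((glue_decomp_inl g₁ g₂ σ D h).choose_spec).symm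
    | inr h =>
      show Sum.inr _ = D.1 (Sum.inr h)
      exact ((glue_decomp_inr g₁ g₂ σ D h).choose_spec).symm
  right_inv := by
    rintro ⟨d₁, d₂⟩
    refine Prod.ext (Subtype.ext (funext fun h => ?_)) (Subtype.ext (funext fun h => ?_))
    · apply Sum.inl_injective
      exact ((glue_decomp_inl g₁ g₂ σ (glueDecomp g₁ g₂ σ d₁ d₂) h).choose_spec).symm
    · apply Sum.inr_injective
      exact ((glue_decomp_inr g₁ g₂ σ (glueDecomp g₁ g₂ σ d₁ d₂) h).choose_spec).symm

end GlueDecomp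

end GlueAux

namespace GlueAux

section NCGlue

variable (g₁ g₂ : HGraph)
variable (σ : {h : g₁.H // g₁.IsExternal h} ≃ {h : g₂.H // g₂.IsExternal h})
variable (d₁ : g₁.Decomp) (d₂ : g₂.Decomp)

theorem glue_edg_inl_ext (x : {h : g₁.H // g₁.IsExternal h}) :
    (HGraph.glue g₁ g₂ σ).edg (Sum.inl x.1) = Sum.inr (σ x).1 := by
  show (if hx : g₁.IsExternal x.1 then Sum.inr (σ ⟨x.1, hx⟩).1
    else Sum.inl (g₁.edg x.1)) = _
  rw [dif_pos x.2, Subtype.coe_eta]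

theorem glue_edg_inl_int (h : g₁.H) (hx : ¬ g₁.IsExternal h) :
    (HGraph.glue g₁ g₂ σ).edg (Sum.inl h) = Sum.inl (g₁.edg h) := by
  show (if hx : g₁.IsExternal h then Sum.inr (σ ⟨h, hx⟩).1
    else Sum.inl (g₁.edg h)) = _
  rw [dif_neg hx]

theorem glue_edg_inr_ext (y : {h : g₂.H // g₂.IsExternal h}) :
    (HGraph.glue g₁ g₂ σ).edg (Sum.inr y.1) = Sum.inl (σ.symm y).1 := by
  show (if hy : g₂.IsExternal y.1 then Sum.inl (σ.symm ⟨y.1, hy⟩).1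
    else Sum.inr (g₂.edg y.1)) = _
  rw [dif_pos y.2, Subtype.coe_eta]

theorem glue_edg_inr_int (h : g₂.H) (hx : ¬ g₂.IsExternal h) :
    (HGraph.glue g₁ g₂ σ).edg (Sum.inr h) = Sum.inr (g₂.edg h) := by
  show (if hy : g₂.IsExternal h then Sum.inl (σ.symm ⟨h, hy⟩).1
    else Sum.inr (g₂.edg h)) = _
  rw [dif_neg hx]

theorem glue_no_ext : ∀ z : (HGraph.glue g₁ g₂ σ).H, ¬ (HGraph.glue g₁ g₂ σ).IsExternal z := by
  rintro (h | h) hcon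
  · by_cases hx : g₁.IsExternal h
    · unfold HGraph.IsExternal at hcon; rw [glue_edg_inl_ext g₁ g₂ σ ⟨h, hx⟩] at hcon
      cases hcon
    · unfold HGraph.IsExternal at hcon; rw [glue_edg_inl_int g₁ g₂ σ h hx] at hcon
      exact hx (Sum.inl_injective hcon)
  · by_cases hx : g₂.IsExternal h
    · unfold HGraph.IsExternal at hcon; rw [glue_edg_inr_ext g₁ g₂ σ ⟨h, hx⟩] at hcon
      cases hcon
    · unfold HGraph.IsExternal at hcon; rw [glue_edg_inr_int g₁ g₂ σ h hx] at hcon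
      exact hx (Sum.inr_injective hcon)

theorem lift_rel₁ : ∀ h h' : g₁.H, Relation.EqvGen (g₁.dstep d₁) h h' →
    Relation.EqvGen ((HGraph.glue g₁ g₂ σ).dstep (glueDecomp g₁ g₂ σ d₁ d₂))
      (Sum.inl h) (Sum.inl h') := by
  intro h h' hrel
  induction hrel with
  | rel h h' hs =>
    rcases hs with hs | hs
    · by_cases hx : g₁.IsExternal h
      · rw [show h' = h from by rw [← hs]; exact hx]
        exact Relation.EqvGen.refl _
      · refine Relation.EqvGen.rel _ _ (Or.inl ?_)
        rw [glue_edg_inl_int g₁ g₂ σ h hx, hs]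
    · exact Relation.EqvGen.rel _ _ (Or.inr (congrArg Sum.inl hs))
  | refl h => exact Relation.EqvGen.refl _
  | symm h h' _ ih => exact Relation.EqvGen.symm _ _ ih
  | trans h h' h'' _ _ ih1 ih2 => exact Relation.EqvGen.trans _ _ _ ih1 ih2

theorem lift_rel₂ : ∀ h h' : g₂.H, Relation.EqvGen (g₂.dstep d₂) h h' →
    Relation.EqvGen ((HGraph.glue g₁ g₂ σ).dstep (glueDecomp g₁ g₂ σ d₁ d₂))
      (Sum.inr h) (Sum.inr h') := by
  intro h h' hrel
  induction hrel with
  | rel h h' hs =>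
    rcases hs with hs | hs
    · by_cases hx : g₂.IsExternal h
      · rw [show h' = h from by rw [← hs]; exact hx]
        exact Relation.EqvGen.refl _
      · refine Relation.EqvGen.rel _ _ (Or.inl ?_)
        rw [glue_edg_inr_int g₁ g₂ σ h hx, hs]
    · exact Relation.EqvGen.rel _ _ (Or.inr (congrArg Sum.inr hs))
  | refl h => exact Relation.EqvGen.refl _
  | symm h h' _ ih => exact Relation.EqvGen.symm _ _ ih
  | trans h h' h'' _ _ ih1 ih2 => exact Relation.EqvGen.trans _ _ _ ih1 ih2

theorem lift_relm : ∀ x y : {h : g₁.H // g₁.IsExternal h},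
    Relation.EqvGen (mstep (partner g₁ d₁)
      (fun x => σ.symm (partner g₂ d₂ (σ x)))) x y →
    Relation.EqvGen ((HGraph.glue g₁ g₂ σ).dstep (glueDecomp g₁ g₂ σ d₁ d₂))
      (Sum.inl x.1) (Sum.inl y.1) := by
  intro x y hrel
  induction hrel with
  | rel x y hs =>
    rcases hs with hs | hs
    · rw [← hs]
      exact lift_rel₁ g₁ g₂ σ d₁ d₂ _ _ (partner_rel g₁ d₁ x)
    · refine Relation.EqvGen.trans _ _ _
        (Relation.EqvGen.rel _ _ (Or.inl (glue_edg_inl_ext g₁ g₂ σ x))) ?_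
      refine Relation.EqvGen.trans _ _ _
        (lift_rel₂ g₁ g₂ σ d₁ d₂ _ _ (partner_rel g₂ d₂ (σ x))) ?_
      refine Relation.EqvGen.trans _ _ _
        (Relation.EqvGen.rel _ _ (Or.inl (glue_edg_inr_ext g₁ g₂ σ _))) ?_
      rw [← hs]
      exact Relation.EqvGen.refl _
  | refl x => exact Relation.EqvGen.refl _
  | symm x y _ ih => exact Relation.EqvGen.symm _ _ ih
  | trans x y z _ _ ih1 ih2 => exact Relation.EqvGen.trans _ _ _ ih1 ih2

theorem ncircuits_glue :
    (HGraph.glue g₁ g₂ σ).ncircuits (glueDecomp g₁ g₂ σ d₁ d₂) =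
      g₁.ncircuits d₁ + g₂.ncircuits d₂ +
        mcount (partner g₁ d₁) (fun x => σ.symm (partner g₂ d₂ (σ x))) := by
  classical
  set Pi1 := partner g₁ d₁ with hPi1
  set tau : {h : g₁.H // g₁.IsExternal h} → {h : g₁.H // g₁.IsExternal h} :=
    fun x => σ.symm (partner g₂ d₂ (σ x)) with htau
  set T := ({c : g₁.Circuits d₁ // g₁.IsClosed d₁ c} ⊕
    ({c : g₂.Circuits d₂ // g₂.IsClosed d₂ c} ⊕ MComps Pi1 tau)) with hT
  have mlem₁ : ∀ (h : g₁.H) (x x' : {h : g₁.H // g₁.IsExternal h}),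
      Relation.EqvGen (g₁.dstep d₁) h x.1 → Relation.EqvGen (g₁.dstep d₁) h x'.1 →
      (Quotient.mk (mSetoid Pi1 tau) x) = Quotient.mk (mSetoid Pi1 tau) x' := by
    intro h x x' hx hx'
    have hxx' := Relation.EqvGen.trans _ _ _ (Relation.EqvGen.symm _ _ hx) hx'
    rcases partner_unique g₁ d₁ x x' hxx' with he | he
    · rw [he]
    · rw [he, ← hPi1]
      exact mk_eq_of_step (Or.inl rfl)
  have mlem₂ : ∀ (y y' : {h : g₂.H // g₂.IsExternal h}),
      Relation.EqvGen (g₂.dstep d₂) y.1 y'.1 →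
      (Quotient.mk (mSetoid Pi1 tau) (σ.symm y)) = Quotient.mk (mSetoid Pi1 tau) (σ.symm y') := by
    intro y y' hyy'
    rcases partner_unique g₂ d₂ y y' hyy' with he | he
    · rw [he]
    · rw [he]
      refine mk_eq_of_step (Or.inr ?_)
      rw [htau]
      beta_reduce
      rw [Equiv.apply_symm_apply]
  have closed₁ : ∀ h : g₁.H,
      ¬ (∃ x : {h : g₁.H // g₁.IsExternal h}, Relation.EqvGen (g₁.dstep d₁) h x.1) →
      g₁.IsClosed d₁ (Quotient.mk (g₁.dsetoid d₁) h) := by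
    intro h hn h' hh' hext
    exact hn ⟨⟨h', hext⟩, Relation.EqvGen.symm _ _ (Quotient.exact hh')⟩
  have closed₂ : ∀ h : g₂.H,
      ¬ (∃ y : {h : g₂.H // g₂.IsExternal h}, Relation.EqvGen (g₂.dstep d₂) h y.1) →
      g₂.IsClosed d₂ (Quotient.mk (g₂.dsetoid d₂) h) := by
    intro h hn h' hh' hext
    exact hn ⟨⟨h', hext⟩, Relation.EqvGen.symm _ _ (Quotient.exact hh')⟩
  set ρ1 : g₁.H → T := fun h =>
    if hc : ∃ x : {h : g₁.H // g₁.IsExternal h}, Relation.EqvGen (g₁.dstep d₁) h x.1 then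
      Sum.inr (Sum.inr (Quotient.mk (mSetoid Pi1 tau) hc.choose))
    else Sum.inl ⟨Quotient.mk (g₁.dsetoid d₁) h, closed₁ h hc⟩ with hρ1
  set ρ2 : g₂.H → T := fun h =>
    if hc : ∃ y : {h : g₂.H // g₂.IsExternal h}, Relation.EqvGen (g₂.dstep d₂) h y.1 then
      Sum.inr (Sum.inr (Quotient.mk (mSetoid Pi1 tau) (σ.symm hc.choose)))
    else Sum.inr (Sum.inl ⟨Quotient.mk (g₂.dsetoid d₂) h, closed₂ h hc⟩) with hρ2
  have ρ1_ext : ∀ (h : g₁.H) (x : {h : g₁.H // g₁.IsExternal h}),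
      Relation.EqvGen (g₁.dstep d₁) h x.1 →
      ρ1 h = Sum.inr (Sum.inr (Quotient.mk (mSetoid Pi1 tau) x)) := by
    intro h x hx
    have hc : ∃ x : {h : g₁.H // g₁.IsExternal h}, Relation.EqvGen (g₁.dstep d₁) h x.1 := ⟨x, hx⟩
    rw [hρ1]
    beta_reduce
    rw [dif_pos hc]
    exact congrArg (fun q => Sum.inr (Sum.inr q)) (mlem₁ h hc.choose x hc.choose_spec hx)
  have ρ1_closed : ∀ (h : g₁.H)
      (hn : ¬ (∃ x : {h : g₁.H // g₁.IsExternal h}, Relation.EqvGen (g₁.dstep d₁) h x.1)),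
      ρ1 h = Sum.inl ⟨Quotient.mk (g₁.dsetoid d₁) h, closed₁ h hn⟩ := by
    intro h hn
    rw [hρ1]
    beta_reduce
    rw [dif_neg hn]
  have ρ2_ext : ∀ (h : g₂.H) (y : {h : g₂.H // g₂.IsExternal h}),
      Relation.EqvGen (g₂.dstep d₂) h y.1 →
      ρ2 h = Sum.inr (Sum.inr (Quotient.mk (mSetoid Pi1 tau) (σ.symm y))) := by
    intro h y hy
    have hc : ∃ y : {h : g₂.H // g₂.IsExternal h}, Relation.EqvGen (g₂.dstep d₂) h y.1 := ⟨y, hy⟩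
    rw [hρ2]
    beta_reduce
    rw [dif_pos hc]
    refine congrArg (fun q => Sum.inr (Sum.inr q)) (mlem₂ hc.choose y ?_)
    exact Relation.EqvGen.trans _ _ _ (Relation.EqvGen.symm _ _ hc.choose_spec) hy
  have ρ2_closed : ∀ (h : g₂.H)
      (hn : ¬ (∃ y : {h : g₂.H // g₂.IsExternal h}, Relation.EqvGen (g₂.dstep d₂) h y.1)),
      ρ2 h = Sum.inr (Sum.inl ⟨Quotient.mk (g₂.dsetoid d₂) h, closed₂ h hn⟩) := by
    intro h hn
    rw [hρ2]
    beta_reduce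
    rw [dif_neg hn]
  set ρ : (HGraph.glue g₁ g₂ σ).H → T := Sum.elim ρ1 ρ2 with hρ
  -- invariance of ρ under glue steps
  have hstepinv : ∀ z w, (HGraph.glue g₁ g₂ σ).dstep (glueDecomp g₁ g₂ σ d₁ d₂) z w →
      ρ z = ρ w := by
    rintro (h | h) w hs
    · rcases hs with hs | hs
      · by_cases hx : g₁.IsExternal h
        · have hw : w = Sum.inr (σ ⟨h, hx⟩).1 := by
            rw [← hs, glue_edg_inl_ext g₁ g₂ σ ⟨h, hx⟩]
          rw [hw, hρ, Sum.elim_inl, Sum.elim_inr,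
            ρ1_ext h ⟨h, hx⟩ (Relation.EqvGen.refl _),
            ρ2_ext _ (σ ⟨h, hx⟩) (Relation.EqvGen.refl _), Equiv.symm_apply_apply]
        · have hw : w = Sum.inl (g₁.edg h) := by
            rw [← hs, glue_edg_inl_int g₁ g₂ σ h hx]
          rw [hw, hρ, Sum.elim_inl, Sum.elim_inl]
          have hstep0 : Relation.EqvGen (g₁.dstep d₁) h (g₁.edg h) :=
            Relation.EqvGen.rel _ _ (Or.inl rfl)
          by_cases hc : ∃ x : {h : g₁.H // g₁.IsExternal h},
              Relation.EqvGen (g₁.dstep d₁) h x.1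
          · obtain ⟨x, hx'⟩ := hc
            rw [ρ1_ext h x hx', ρ1_ext (g₁.edg h) x
              (Relation.EqvGen.trans _ _ _ (Relation.EqvGen.symm _ _ hstep0) hx')]
          · have hc' : ¬ (∃ x : {h : g₁.H // g₁.IsExternal h},
                Relation.EqvGen (g₁.dstep d₁) (g₁.edg h) x.1) := by
              rintro ⟨x, hx'⟩
              exact hc ⟨x, Relation.EqvGen.trans _ _ _ hstep0 hx'⟩
            rw [ρ1_closed h hc, ρ1_closed (g₁.edg h) hc']
            exact congrArg Sum.inl (Subtype.ext (Quotient.sound hstep0))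
      · have hw : w = Sum.inl (d₁.1 h) := by rw [← hs]; rfl
        rw [hw, hρ, Sum.elim_inl, Sum.elim_inl]
        have hstep0 : Relation.EqvGen (g₁.dstep d₁) h (d₁.1 h) :=
          Relation.EqvGen.rel _ _ (Or.inr rfl)
        by_cases hc : ∃ x : {h : g₁.H // g₁.IsExternal h},
            Relation.EqvGen (g₁.dstep d₁) h x.1
        · obtain ⟨x, hx'⟩ := hc
          rw [ρ1_ext h x hx', ρ1_ext (d₁.1 h) x
            (Relation.EqvGen.trans _ _ _ (Relation.EqvGen.symm _ _ hstep0) hx')]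
        · have hc' : ¬ (∃ x : {h : g₁.H // g₁.IsExternal h},
              Relation.EqvGen (g₁.dstep d₁) (d₁.1 h) x.1) := by
            rintro ⟨x, hx'⟩
            exact hc ⟨x, Relation.EqvGen.trans _ _ _ hstep0 hx'⟩
          rw [ρ1_closed h hc, ρ1_closed (d₁.1 h) hc']
          exact congrArg Sum.inl (Subtype.ext (Quotient.sound hstep0))
    · rcases hs with hs | hs
      · by_cases hx : g₂.IsExternal h
        · have hw : w = Sum.inl (σ.symm ⟨h, hx⟩).1 := by
            rw [← hs, glue_edg_inr_ext g₁ g₂ σ ⟨h, hx⟩]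
          rw [hw, hρ, Sum.elim_inr, Sum.elim_inl,
            ρ2_ext h ⟨h, hx⟩ (Relation.EqvGen.refl _),
            ρ1_ext _ (σ.symm ⟨h, hx⟩) (Relation.EqvGen.refl _)]
        · have hw : w = Sum.inr (g₂.edg h) := by
            rw [← hs, glue_edg_inr_int g₁ g₂ σ h hx]
          rw [hw, hρ, Sum.elim_inr, Sum.elim_inr]
          have hstep0 : Relation.EqvGen (g₂.dstep d₂) h (g₂.edg h) :=
            Relation.EqvGen.rel _ _ (Or.inl rfl)
          by_cases hc : ∃ y : {h : g₂.H // g₂.IsExternal h},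
              Relation.EqvGen (g₂.dstep d₂) h y.1
          · obtain ⟨y, hy'⟩ := hc
            rw [ρ2_ext h y hy', ρ2_ext (g₂.edg h) y
              (Relation.EqvGen.trans _ _ _ (Relation.EqvGen.symm _ _ hstep0) hy')]
          · have hc' : ¬ (∃ y : {h : g₂.H // g₂.IsExternal h},
                Relation.EqvGen (g₂.dstep d₂) (g₂.edg h) y.1) := by
              rintro ⟨y, hy'⟩
              exact hc ⟨y, Relation.EqvGen.trans _ _ _ hstep0 hy'⟩
            rw [ρ2_closed h hc, ρ2_closed (g₂.edg h) hc']
            exact congrArg (fun q => Sum.inr (Sum.inl q)) (Subtype.ext (Quotient.sound hstep0))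
      · have hw : w = Sum.inr (d₂.1 h) := by rw [← hs]; rfl
        rw [hw, hρ, Sum.elim_inr, Sum.elim_inr]
        have hstep0 : Relation.EqvGen (g₂.dstep d₂) h (d₂.1 h) :=
          Relation.EqvGen.rel _ _ (Or.inr rfl)
        by_cases hc : ∃ y : {h : g₂.H // g₂.IsExternal h},
            Relation.EqvGen (g₂.dstep d₂) h y.1
        · obtain ⟨y, hy'⟩ := hc
          rw [ρ2_ext h y hy', ρ2_ext (d₂.1 h) y
            (Relation.EqvGen.trans _ _ _ (Relation.EqvGen.symm _ _ hstep0) hy')]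
        · have hc' : ¬ (∃ y : {h : g₂.H // g₂.IsExternal h},
              Relation.EqvGen (g₂.dstep d₂) (d₂.1 h) y.1) := by
            rintro ⟨y, hy'⟩
            exact hc ⟨y, Relation.EqvGen.trans _ _ _ hstep0 hy'⟩
          rw [ρ2_closed h hc, ρ2_closed (d₂.1 h) hc']
          exact congrArg (fun q => Sum.inr (Sum.inl q)) (Subtype.ext (Quotient.sound hstep0))
  have hrelinv : ∀ z w, Relation.EqvGen
      ((HGraph.glue g₁ g₂ σ).dstep (glueDecomp g₁ g₂ σ d₁ d₂)) z w → ρ z = ρ w := by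
    intro z w h
    induction h with
    | rel z w h => exact hstepinv z w h
    | refl z => rfl
    | symm z w _ ih => exact ih.symm
    | trans z w v _ _ ih1 ih2 => exact ih1.trans ih2
  set Φ : (HGraph.glue g₁ g₂ σ).Circuits (glueDecomp g₁ g₂ σ d₁ d₂) → T :=
    Quotient.lift ρ hrelinv with hΦ
  set Ψ1 : {c : g₁.Circuits d₁ // g₁.IsClosed d₁ c} →
      (HGraph.glue g₁ g₂ σ).Circuits (glueDecomp g₁ g₂ σ d₁ d₂) := fun c =>
    Quotient.lift (fun h : g₁.H =>
        Quotient.mk ((HGraph.glue g₁ g₂ σ).dsetoid (glueDecomp g₁ g₂ σ d₁ d₂)) (Sum.inl h))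
      (fun a b hab => Quotient.sound (lift_rel₁ g₁ g₂ σ d₁ d₂ a b hab)) c.1 with hΨ1
  set Ψ2 : {c : g₂.Circuits d₂ // g₂.IsClosed d₂ c} →
      (HGraph.glue g₁ g₂ σ).Circuits (glueDecomp g₁ g₂ σ d₁ d₂) := fun c =>
    Quotient.lift (fun h : g₂.H =>
        Quotient.mk ((HGraph.glue g₁ g₂ σ).dsetoid (glueDecomp g₁ g₂ σ d₁ d₂)) (Sum.inr h))
      (fun a b hab => Quotient.sound (lift_rel₂ g₁ g₂ σ d₁ d₂ a b hab)) c.1 with hΨ2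
  set Ψ3 : MComps Pi1 tau →
      (HGraph.glue g₁ g₂ σ).Circuits (glueDecomp g₁ g₂ σ d₁ d₂) :=
    Quotient.lift (fun x : {h : g₁.H // g₁.IsExternal h} =>
        Quotient.mk ((HGraph.glue g₁ g₂ σ).dsetoid (glueDecomp g₁ g₂ σ d₁ d₂)) (Sum.inl x.1))
      (fun a b hab => Quotient.sound (lift_relm g₁ g₂ σ d₁ d₂ a b hab)) with hΨ3
  set Ψ : T → (HGraph.glue g₁ g₂ σ).Circuits (glueDecomp g₁ g₂ σ d₁ d₂) :=
    Sum.elim Ψ1 (Sum.elim Ψ2 Ψ3) with hΨ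
  have hΨΦ : ∀ q, Ψ (Φ q) = q := by
    intro q
    induction q using Quotient.ind with
    | _ z =>
      rcases z with h | h
      · show Ψ (ρ1 h) = _
        by_cases hc : ∃ x : {h : g₁.H // g₁.IsExternal h},
            Relation.EqvGen (g₁.dstep d₁) h x.1
        · obtain ⟨x, hx⟩ := hc
          rw [ρ1_ext h x hx, hΨ, Sum.elim_inr, Sum.elim_inr]
          exact Quotient.sound (Relation.EqvGen.symm _ _
            (lift_rel₁ g₁ g₂ σ d₁ d₂ h x.1 hx))
        · rw [ρ1_closed h hc, hΨ, Sum.elim_inl]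
          rfl
      · show Ψ (ρ2 h) = _
        by_cases hc : ∃ y : {h : g₂.H // g₂.IsExternal h},
            Relation.EqvGen (g₂.dstep d₂) h y.1
        · obtain ⟨y, hy⟩ := hc
          rw [ρ2_ext h y hy, hΨ, Sum.elim_inr, Sum.elim_inr]
          refine Quotient.sound (Relation.EqvGen.symm _ _ ?_)
          refine Relation.EqvGen.trans _ _ _
            (lift_rel₂ g₁ g₂ σ d₁ d₂ h y.1 hy) ?_
          refine Relation.EqvGen.rel _ _ (Or.inl ?_)
          exact glue_edg_inr_ext g₁ g₂ σ y
        · rw [ρ2_closed h hc, hΨ, Sum.elim_inr, Sum.elim_inl]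
          rfl
  have hΦΨ : ∀ t, Φ (Ψ t) = t := by
    rintro (⟨c, hcl⟩ | (⟨c, hcl⟩ | m))
    · induction c using Quotient.ind with
      | _ h =>
        rw [hΨ, Sum.elim_inl]
        show ρ1 h = _
        have hc : ¬ (∃ x : {h : g₁.H // g₁.IsExternal h},
            Relation.EqvGen (g₁.dstep d₁) h x.1) := by
          rintro ⟨x, hx⟩
          exact hcl x.1 (Quotient.sound (Relation.EqvGen.symm _ _ hx)) x.2
        rw [ρ1_closed h hc]
    · induction c using Quotient.ind with
      | _ h =>
        rw [hΨ, Sum.elim_inr, Sum.elim_inl]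
        show ρ2 h = _
        have hc : ¬ (∃ y : {h : g₂.H // g₂.IsExternal h},
            Relation.EqvGen (g₂.dstep d₂) h y.1) := by
          rintro ⟨y, hy⟩
          exact hcl y.1 (Quotient.sound (Relation.EqvGen.symm _ _ hy)) y.2
        rw [ρ2_closed h hc]
    · induction m using Quotient.ind with
      | _ x =>
        rw [hΨ, Sum.elim_inr, Sum.elim_inr]
        show ρ1 x.1 = _
        rw [ρ1_ext x.1 x (Relation.EqvGen.refl _)]
  have e : (HGraph.glue g₁ g₂ σ).Circuits (glueDecomp g₁ g₂ σ d₁ d₂) ≃ T := ⟨Φ, Ψ, hΨΦ, hΦΨ⟩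
  have hallclosed : ∀ c : (HGraph.glue g₁ g₂ σ).Circuits (glueDecomp g₁ g₂ σ d₁ d₂),
      (HGraph.glue g₁ g₂ σ).IsClosed (glueDecomp g₁ g₂ σ d₁ d₂) c :=
    fun c h _ hext => glue_no_ext g₁ g₂ σ h hext
  haveI : Finite (g₁.Circuits d₁) := Quotient.finite _
  haveI : Finite (g₂.Circuits d₂) := Quotient.finite _
  rw [HGraph.ncircuits, Nat.card_congr (Equiv.subtypeUnivEquiv hallclosed),
    Nat.card_congr e, hT, Nat.card_sum, Nat.card_sum, add_assoc]
  rfl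

end NCGlue

end GlueAux


/-- Let `p ≥ 1` and let `g₁`, `g₂` be graphs with exactly `2p`
external half-edges each, all of whose vertices have even valence.  Summing the
circuit partition polynomial of the glued vacuum graph `g₁ ∪_σ g₂` over all
`(2p)!` bijections `σ` between the external half-edges gives
`Σ_σ J(g₁∪_σ g₂, N) = 2^p · p! · (∏_{j=0}^{p-1}(N+2j)) · J(g₁,N) · J(g₂,N)`. -/
theorem glue_sum_circuit_partition (p : ℕ) (hp : 1 ≤ p) (g₁ g₂ : HGraph)
    (h₁ : g₁.extCard = 2 * p) (h₂ : g₂.extCard = 2 * p)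
    (he₁ : ∀ v : g₁.V, Even (g₁.valence v)) (he₂ : ∀ v : g₂.V, Even (g₂.valence v)) :
    ∑ σ : {h : g₁.H // g₁.IsExternal h} ≃ {h : g₂.H // g₂.IsExternal h},
        (HGraph.glue g₁ g₂ σ).J =
      Polynomial.C (((2 ^ p * Nat.factorial p : ℕ) : ℤ)) *
        (∏ j ∈ Finset.range p, (Polynomial.X + Polynomial.C (2 * (j : ℤ)))) *
        g₁.J * g₂.J := by

  classical
  have hK : ∀ (d₁ : g₁.Decomp) (d₂ : g₂.Decomp),
      (∑ σ : {h : g₁.H // g₁.IsExternal h} ≃ {h : g₂.H // g₂.IsExternal h},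
        (Polynomial.X : Polynomial ℤ) ^ GlueAux.mcount (GlueAux.partner g₁ d₁)
          (fun x => σ.symm (GlueAux.partner g₂ d₂ (σ x)))) =
      Polynomial.C ((2 ^ p * p.factorial : ℕ) : ℤ) *
        ∏ j ∈ Finset.range p, (Polynomial.X + Polynomial.C (2 * (j : ℤ))) :=
    fun d₁ d₂ => GlueAux.sum_equiv_pow p _ _ (GlueAux.partner g₁ d₁) (GlueAux.partner g₂ d₂)
      (GlueAux.partner_invol g₁ d₁) (GlueAux.partner_fpf g₁ d₁)
      (GlueAux.partner_invol g₂ d₂) (GlueAux.partner_fpf g₂ d₂)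
      (show Fintype.card _ = 2 * p from h₁) (show Fintype.card _ = 2 * p from h₂)
  have hJ : ∀ σ : {h : g₁.H // g₁.IsExternal h} ≃ {h : g₂.H // g₂.IsExternal h},
      (HGraph.glue g₁ g₂ σ).J =
      ∑ d₁ : g₁.Decomp, ∑ d₂ : g₂.Decomp,
        (Polynomial.X : Polynomial ℤ) ^ g₁.ncircuits d₁ *
        (Polynomial.X : Polynomial ℤ) ^ g₂.ncircuits d₂ *
        (Polynomial.X : Polynomial ℤ) ^ GlueAux.mcount (GlueAux.partner g₁ d₁)
          (fun x => σ.symm (GlueAux.partner g₂ d₂ (σ x))) := by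
    intro σ
    rw [HGraph.J, ← Equiv.sum_comp (GlueAux.decompEquiv g₁ g₂ σ).symm
      (fun D => (Polynomial.X : Polynomial ℤ) ^ (HGraph.glue g₁ g₂ σ).ncircuits D),
      Fintype.sum_prod_type]
    refine Finset.sum_congr rfl fun d₁ _ => Finset.sum_congr rfl fun d₂ _ => ?_
    rw [show (GlueAux.decompEquiv g₁ g₂ σ).symm (d₁, d₂) =
        GlueAux.glueDecomp g₁ g₂ σ d₁ d₂ from rfl,
      GlueAux.ncircuits_glue g₁ g₂ σ d₁ d₂, pow_add, pow_add]
  rw [Finset.sum_congr rfl (fun σ _ => hJ σ), Finset.sum_comm,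
    Finset.sum_congr rfl (fun d₁ _ => Finset.sum_comm)]
  have hin : ∀ d₁ : g₁.Decomp, ∀ d₂ : g₂.Decomp,
      (∑ σ : {h : g₁.H // g₁.IsExternal h} ≃ {h : g₂.H // g₂.IsExternal h},
        (Polynomial.X : Polynomial ℤ) ^ g₁.ncircuits d₁ *
        (Polynomial.X : Polynomial ℤ) ^ g₂.ncircuits d₂ *
        (Polynomial.X : Polynomial ℤ) ^ GlueAux.mcount (GlueAux.partner g₁ d₁)
          (fun x => σ.symm (GlueAux.partner g₂ d₂ (σ x)))) =
      (Polynomial.X : Polynomial ℤ) ^ g₁.ncircuits d₁ *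
        (Polynomial.X : Polynomial ℤ) ^ g₂.ncircuits d₂ *
        (Polynomial.C ((2 ^ p * p.factorial : ℕ) : ℤ) *
          ∏ j ∈ Finset.range p, (Polynomial.X + Polynomial.C (2 * (j : ℤ)))) := by
    intro d₁ d₂
    rw [← Finset.mul_sum, hK d₁ d₂]
  rw [Finset.sum_congr rfl
    (fun d₁ _ => Finset.sum_congr rfl (fun d₂ _ => hin d₁ d₂))]
  have hout : ∀ d₁ : g₁.Decomp,
      (∑ d₂ : g₂.Decomp,
        (Polynomial.X : Polynomial ℤ) ^ g₁.ncircuits d₁ *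
        (Polynomial.X : Polynomial ℤ) ^ g₂.ncircuits d₂ *
        (Polynomial.C ((2 ^ p * p.factorial : ℕ) : ℤ) *
          ∏ j ∈ Finset.range p, (Polynomial.X + Polynomial.C (2 * (j : ℤ))))) =
      (Polynomial.X : Polynomial ℤ) ^ g₁.ncircuits d₁ *
        ((Polynomial.C ((2 ^ p * p.factorial : ℕ) : ℤ) *
          ∏ j ∈ Finset.range p, (Polynomial.X + Polynomial.C (2 * (j : ℤ)))) * g₂.J) := by
    intro d₁
    rw [HGraph.J, Finset.mul_sum, Finset.mul_sum]
    exact Finset.sum_congr rfl fun d₂ _ => by ring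
  rw [Finset.sum_congr rfl (fun d₁ _ => hout d₁), ← Finset.sum_mul, ← HGraph.J]
  ring
end

section
/- Let G be a vacuum graph (a completion) that contains at least one vertex of valence 2p for some integer p ≥ 1. Then the polynomial ∏_{j=0}^{p−1}(N+2j) divides J(G,N); in particular, J(G,N) and T(G,N) vanish at every N ∈ {0, −2, −4, …, −2p+2}. -/
set_option maxHeartbeats 1000000

namespace CPZ
open Relation Function

section generic
variable {α : Type}

def pairRel (f g : α → α) : α → α → Prop := fun a b => f a = b ∨ g a = b

theorem pairRel_symm {f g : α → α} (hf : ∀ x, f (f x) = x) (hg : ∀ x, g (g x) = x) :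
    Symmetric (pairRel f g) := by
  rintro a b (h | h)
  · exact Or.inl (by rw [← h, hf])
  · exact Or.inr (by rw [← h, hg])

def pairSetoid (f g : α → α) : Setoid α :=
  ⟨Relation.EqvGen (pairRel f g), Relation.EqvGen.is_equivalence _⟩

theorem eqvGen_iff_rtg {r : α → α → Prop} (hs : Symmetric r) {a b : α} :
    Relation.EqvGen r a b ↔ Relation.ReflTransGen r a b := by
  constructor
  · intro h
    induction h with
    | rel x y h => exact ReflTransGen.single h
    | refl x => exact ReflTransGen.refl
    | symm x y _ ih => exact ReflTransGen.mono (fun a b h => hs h) _ _ (ReflTransGen.swap _ _ ih)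
    | trans x y z _ _ ih1 ih2 => exact ih1.trans ih2
  · intro h
    induction h with
    | refl => exact EqvGen.refl _
    | tail _ h ih => exact ih.trans _ _ _ (EqvGen.rel _ _ h)

end generic

structure Walk (K : Type) [Fintype K] where
  e : K → K
  rf : K → K
  Av : K → Prop
  dec : DecidablePred Av
  he : ∀ h, e (e h) = h
  hef : ∀ h, e h ≠ h
  hr : ∀ h, rf (rf h) = h
  hrAv : ∀ h, Av h → rf h = h
  hriff : ∀ h, Av (rf h) ↔ Av h
  hrne : ∀ h, ¬ Av h → rf h ≠ h

namespace Walk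

variable {K : Type} [Fintype K] (W : Walk K)

def ψ : K → K := fun h => W.e (W.rf h)
def φ : K → K := fun h => W.rf (W.e h)

theorem φψ (h : K) : W.φ (W.ψ h) = h := by simp [ψ, φ, W.he, W.hr]
theorem ψφ (h : K) : W.ψ (W.φ h) = h := by simp [ψ, φ, W.he, W.hr]

theorem ψ_inj : Function.Injective W.ψ := Function.LeftInverse.injective W.φψ

theorem rf_ψ_iter : ∀ (k : ℕ) (h : K), W.rf (W.ψ^[k] h) = W.φ^[k] (W.rf h) := by
  intro k
  induction k with
  | zero => intro h; rfl
  | succ k ih =>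
    intro h
    rw [Function.iterate_succ_apply', Function.iterate_succ_apply', ← ih h]
    rfl

def ψperm : Equiv.Perm K := ⟨W.ψ, W.φ, W.φψ, W.ψφ⟩

theorem exists_return (h : K) : ∃ k, W.ψ^[k + 1] h = h := by
  have hpos : 0 < orderOf W.ψperm := orderOf_pos _
  refine ⟨orderOf W.ψperm - 1, ?_⟩
  have h2 : (⇑W.ψperm)^[orderOf W.ψperm] h = h := by
    rw [← Equiv.Perm.coe_pow, pow_orderOf_eq_one]; rfl
  rw [Nat.sub_add_cancel hpos]
  exact h2

theorem exA (h : K) (hA : W.Av h) : ∃ k, W.Av (W.ψ^[k + 1] h) := by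
  obtain ⟨k, hk⟩ := W.exists_return h
  exact ⟨k, by rwa [hk]⟩

def fret (h : K) (hA : W.Av h) : ℕ := letI := W.dec; Nat.find (W.exA h hA)

def tauv (h : K) (hA : W.Av h) : K := W.ψ^[W.fret h hA + 1] h

theorem tauv_av (h : K) (hA : W.Av h) : W.Av (W.tauv h hA) := by
  letI := W.dec; exact Nat.find_spec (W.exA h hA)

theorem tauv_min (h : K) (hA : W.Av h) {i : ℕ} (h1 : 1 ≤ i) (h2 : i < W.fret h hA + 1) :
    ¬ W.Av (W.ψ^[i] h) := by
  letI := W.dec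
  have := Nat.find_min (W.exA h hA) (show i - 1 < W.fret h hA from by
    simp only [fret] at h2 ⊢; omega)
  rwa [Nat.sub_add_cancel h1] at this

theorem tauv_eq (h : K) (hA : W.Av h) {k : ℕ} (hk1 : 1 ≤ k) (hAk : W.Av (W.ψ^[k] h))
    (hmin : ∀ i, 1 ≤ i → i < k → ¬ W.Av (W.ψ^[i] h)) : W.tauv h hA = W.ψ^[k] h := by
  letI := W.dec
  have hle : W.fret h hA ≤ k - 1 := by
    apply Nat.find_le
    rw [Nat.sub_add_cancel hk1]; exact hAk
  have h2 : ¬ (W.fret h hA + 1 < k) := fun hlt => hmin _ (by omega) hlt (W.tauv_av h hA)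
  have h3 : W.fret h hA + 1 = k := by omega
  rw [tauv, h3]

theorem ψ_iter_eq_rf (i k : ℕ) (hik : i ≤ k) (h : K) (hAk : W.Av (W.ψ^[k] h)) :
    W.ψ^[i] (W.ψ^[k] h) = W.rf (W.ψ^[k - i] h) := by
  have hx : W.rf (W.ψ^[k] h) = W.ψ^[k] h := W.hrAv _ hAk
  have h1 := W.rf_ψ_iter i (W.rf (W.ψ^[k] h))
  rw [hx] at h1
  rw [hx] at h1
  have h2 : W.φ^[i] (W.ψ^[k] h) = W.ψ^[k - i] h := by
    conv_lhs => rw [show k = i + (k - i) from by omega, Function.iterate_add_apply]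
    exact (Function.LeftInverse.iterate W.φψ i) _
  calc W.ψ^[i] (W.ψ^[k] h) = W.rf (W.rf (W.ψ^[i] (W.ψ^[k] h))) := (W.hr _).symm
  _ = W.rf (W.φ^[i] (W.ψ^[k] h)) := by rw [h1]
  _ = W.rf (W.ψ^[k - i] h) := by rw [h2]

theorem tauv_invol (h : K) (hA : W.Av h) :
    W.tauv (W.tauv h hA) (W.tauv_av h hA) = h := by
  have hAk : W.Av (W.ψ^[W.fret h hA + 1] h) := W.tauv_av h hA
  set k := W.fret h hA + 1 with hkdef
  have hk1 : 1 ≤ k := by omega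
  have key : W.tauv (W.ψ^[k] h) hAk = W.ψ^[k] (W.ψ^[k] h) := by
    apply W.tauv_eq _ hAk hk1
    · rw [W.ψ_iter_eq_rf k k le_rfl h hAk]
      simp only [Nat.sub_self, Function.iterate_zero_apply]
      rw [W.hrAv h hA]; exact hA
    · intro i hi1 hik
      rw [W.ψ_iter_eq_rf i k (le_of_lt hik) h hAk]
      rw [W.hriff]
      exact W.tauv_min h hA (by omega) (by omega)
  have : W.ψ^[k] (W.ψ^[k] h) = h := by
    rw [W.ψ_iter_eq_rf k k le_rfl h hAk]
    simp only [Nat.sub_self, Function.iterate_zero_apply]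
    exact W.hrAv h hA
  show W.tauv (W.ψ^[k] h) hAk = h
  exact key.trans this

theorem tauv_ne (h : K) (hA : W.Av h) : W.tauv h hA ≠ h := by
  intro heq
  have hAk : W.Av (W.ψ^[W.fret h hA + 1] h) := W.tauv_av h hA
  set k := W.fret h hA + 1 with hkdef
  have hk1 : 1 ≤ k := by omega
  have heq' : W.ψ^[k] h = h := heq
  have hrefl : ∀ i, i ≤ k → W.ψ^[i] h = W.rf (W.ψ^[k - i] h) := by
    intro i hi
    have := W.ψ_iter_eq_rf i k hi h hAk
    rwa [heq'] at this
  rcases Nat.even_or_odd k with ⟨m, hm⟩ | ⟨m, hm⟩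
  · have hm1 : 1 ≤ m := by omega
    have hx := hrefl m (by omega)
    rw [show k - m = m from by omega] at hx
    have hnav : ¬ W.Av (W.ψ^[m] h) := W.tauv_min h hA hm1 (by omega)
    exact W.hrne _ hnav hx.symm
  · have hx := hrefl (m + 1) (by omega)
    rw [show k - (m + 1) = m from by omega, Function.iterate_succ_apply'] at hx
    exact W.hef _ hx

end Walk
end CPZ
namespace CPZ
namespace Walk
open Relation Function

variable {K : Type} [Fintype K] (W : Walk K)

structure Dc (W : Walk K) where
  dc : K → K
  invol : ∀ h, dc (dc h) = h
  av : ∀ h, W.Av (dc h) ↔ W.Av h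
  off : ∀ h, ¬ W.Av h → dc h = W.rf h

/-- orbit relation of ψ -/
def Wrel (h x : K) : Prop := ∃ k, W.ψ^[k] h = x ∨ W.ψ^[k] x = h

theorem wrel_refl (h : K) : W.Wrel h h := ⟨0, Or.inl rfl⟩

theorem wrel_symm {a b : K} (h : W.Wrel a b) : W.Wrel b a := by
  obtain ⟨k, hk | hk⟩ := h
  exacts [⟨k, Or.inr hk⟩, ⟨k, Or.inl hk⟩]

theorem wrel_trans {a b c : K} (h1 : W.Wrel a b) (h2 : W.Wrel b c) : W.Wrel a c := by
  obtain ⟨k, hk | hk⟩ := h1 <;> obtain ⟨l, hl | hl⟩ := h2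
  · exact ⟨l + k, Or.inl (by rw [Function.iterate_add_apply, hk, hl])⟩
  · rcases Nat.le_total k l with hle | hle
    · refine ⟨l - k, Or.inr ?_⟩
      apply (W.ψ_inj.iterate k)
      rw [← Function.iterate_add_apply, show k + (l - k) = l from by omega, hl, hk]
    · refine ⟨k - l, Or.inl ?_⟩
      apply (W.ψ_inj.iterate l)
      rw [← Function.iterate_add_apply, show l + (k - l) = k from by omega, hk, ← hl]
  · rcases Nat.le_total k l with hle | hle
    · refine ⟨l - k, Or.inl ?_⟩
      rw [← hk, ← Function.iterate_add_apply, show l - k + k = l from by omega, hl]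
    · refine ⟨k - l, Or.inr ?_⟩
      rw [← hl, ← Function.iterate_add_apply, show k - l + l = k from by omega, hk]
  · exact ⟨k + l, Or.inr (by rw [Function.iterate_add_apply, hl, hk])⟩

theorem wrel_rf {h x : K} (hw : W.Wrel h x) : W.Wrel (W.rf h) (W.rf x) := by
  obtain ⟨k, hk | hk⟩ := hw
  · refine ⟨k, Or.inr ?_⟩
    have hh : W.rf x = W.φ^[k] (W.rf h) := by rw [← hk, W.rf_ψ_iter]
    rw [hh]
    exact (Function.LeftInverse.iterate W.ψφ k) _
  · refine ⟨k, Or.inl ?_⟩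
    have hh : W.rf h = W.φ^[k] (W.rf x) := by rw [← hk, W.rf_ψ_iter]
    rw [hh]
    exact (Function.LeftInverse.iterate W.ψφ k) _

theorem wrel_rf_iff (b : K) {x : K} (hx : W.Av x) : W.Wrel (W.rf b) x ↔ W.Wrel b x := by
  constructor
  · intro hw
    have := W.wrel_rf hw
    rwa [W.hr, W.hrAv x hx] at this
  · intro hw
    have := W.wrel_rf hw
    rwa [W.hrAv x hx] at this

theorem wrel_rf_eb (b : K) : W.Wrel (W.rf b) (W.e b) :=
  ⟨1, Or.inl (by rw [Function.iterate_one]; show W.e (W.rf (W.rf b)) = W.e b; rw [W.hr])⟩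

/-- the step chain: h is connected to ψ h in the circuit relation -/
theorem step_ψ (D : W.Dc) (h : K) : Relation.EqvGen (pairRel W.e D.dc) h (W.ψ h) := by
  by_cases hA : W.Av h
  · have hh : W.ψ h = W.e h := by rw [ψ, W.hrAv h hA]
    rw [hh]; exact EqvGen.rel _ _ (Or.inl rfl)
  · have h1 : Relation.EqvGen (pairRel W.e D.dc) h (D.dc h) := EqvGen.rel _ _ (Or.inr rfl)
    have h2 : Relation.EqvGen (pairRel W.e D.dc) (D.dc h) (W.e (D.dc h)) :=
      EqvGen.rel _ _ (Or.inl rfl)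
    have hh : W.ψ h = W.e (D.dc h) := by rw [ψ, D.off h hA]
    rw [hh]; exact h1.trans _ _ _ h2

theorem step_ψ_iter (D : W.Dc) (k : ℕ) (h : K) :
    Relation.EqvGen (pairRel W.e D.dc) h (W.ψ^[k] h) := by
  induction k with
  | zero => exact EqvGen.refl _
  | succ k ih =>
    rw [Function.iterate_succ_apply']
    exact ih.trans _ _ _ (W.step_ψ D _)

def pX (D : W.Dc) : {h : K // W.Av h} → {h : K // W.Av h} :=
  fun a => ⟨D.dc a.1, (D.av a.1).mpr a.2⟩

def tX : {h : K // W.Av h} → {h : K // W.Av h} :=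
  fun a => ⟨W.tauv a.1 a.2, W.tauv_av a.1 a.2⟩

theorem pX_invol (D : W.Dc) (a : {h : K // W.Av h}) : W.pX D (W.pX D a) = a :=
  Subtype.ext (D.invol a.1)

theorem tX_invol (a : {h : K // W.Av h}) : W.tX (W.tX a) = a :=
  Subtype.ext (W.tauv_invol a.1 a.2)

theorem tX_ne (a : {h : K // W.Av h}) : W.tX a ≠ a :=
  fun hc => W.tauv_ne a.1 a.2 (congrArg Subtype.val hc)

theorem eqv2_of_iter (D : W.Dc) :
    ∀ (k : ℕ) (h : K) (hA : W.Av h) (hAk : W.Av (W.ψ^[k] h)),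
    Relation.EqvGen (pairRel (W.pX D) W.tX) ⟨h, hA⟩ ⟨W.ψ^[k] h, hAk⟩ := by
  intro k
  induction k using Nat.strong_induction_on with
  | _ k ih =>
    intro h hA hAk
    rcases Nat.eq_zero_or_pos k with rfl | hk
    · exact EqvGen.refl _
    · have htk : W.fret h hA + 1 ≤ k := by
        letI := W.dec
        have hle : W.fret h hA ≤ k - 1 := Nat.find_le (by
          rw [Nat.sub_add_cancel hk]; exact hAk)
        omega
      set t := W.fret h hA + 1 with ht
      have hstep : Relation.EqvGen (pairRel (W.pX D) W.tX) ⟨h, hA⟩ (W.tX ⟨h, hA⟩) :=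
        EqvGen.rel _ _ (Or.inr rfl)
      have hrest : W.ψ^[k] h = W.ψ^[k - t] (W.ψ^[t] h) := by
        rw [← Function.iterate_add_apply, show k - t + t = k from by omega]
      have hAk' : W.Av (W.ψ^[k - t] (W.ψ^[t] h)) := by rw [← hrest]; exact hAk
      have hmid := ih (k - t) (by omega) (W.ψ^[t] h) (W.tauv_av h hA) hAk'
      have hfin : (⟨W.ψ^[k - t] (W.ψ^[t] h), hAk'⟩ : {h : K // W.Av h}) = ⟨W.ψ^[k] h, hAk⟩ :=
        Subtype.ext hrest.symm
      rw [← hfin]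
      exact hstep.trans _ _ _ hmid

theorem eqv2_of_wrel (D : W.Dc) {x x' : K} (hx : W.Av x) (hx' : W.Av x')
    (hw : W.Wrel x x') :
    Relation.EqvGen (pairRel (W.pX D) W.tX) ⟨x, hx⟩ ⟨x', hx'⟩ := by
  obtain ⟨k, hk | hk⟩ := hw
  · have h1 := W.eqv2_of_iter D k x hx (by rw [hk]; exact hx')
    rwa [show (⟨W.ψ^[k] x, _⟩ : {h : K // W.Av h}) = ⟨x', hx'⟩ from Subtype.ext hk] at h1
  · have h1 := W.eqv2_of_iter D k x' hx' (by rw [hk]; exact hx)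
    have h2 := h1.symm _ _
    rwa [show (⟨W.ψ^[k] x', _⟩ : {h : K // W.Av h}) = ⟨x, hx⟩ from Subtype.ext hk] at h2

def MeetsW (h : K) : Prop := ∃ x, W.Wrel h x ∧ W.Av x

theorem phi_of_orb (D : W.Dc) {b c : K} (horb : ∀ x, W.Av x → (W.Wrel b x ↔ W.Wrel c x)) :
    (W.MeetsW b ↔ W.MeetsW c) ∧
    ∀ (x x' : K) (hx : W.Av x) (hx' : W.Av x'), W.Wrel b x → W.Wrel c x' →
      Relation.EqvGen (pairRel (W.pX D) W.tX) ⟨x, hx⟩ ⟨x', hx'⟩ := by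
  constructor
  · exact ⟨fun ⟨x, w, a⟩ => ⟨x, (horb x a).mp w, a⟩, fun ⟨x, w, a⟩ => ⟨x, (horb x a).mpr w, a⟩⟩
  · intro x x' hx hx' w1 w2
    exact W.eqv2_of_wrel D hx hx' (W.wrel_trans (W.wrel_symm ((horb x hx).mp w1)) w2)

theorem phi_step (D : W.Dc) {b c : K} (hbc : pairRel W.e D.dc b c) :
    (W.MeetsW b ↔ W.MeetsW c) ∧
    ∀ (x x' : K) (hx : W.Av x) (hx' : W.Av x'), W.Wrel b x → W.Wrel c x' →
      Relation.EqvGen (pairRel (W.pX D) W.tX) ⟨x, hx⟩ ⟨x', hx'⟩ := by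
  rcases hbc with hbc | hbc
  · -- c = e b
    subst hbc
    apply W.phi_of_orb D
    intro x hx
    rw [← W.wrel_rf_iff b hx]
    constructor
    · intro hw; exact W.wrel_trans (W.wrel_symm (W.wrel_rf_eb b)) hw
    · intro hw; exact W.wrel_trans (W.wrel_rf_eb b) hw
  · -- c = dc b
    by_cases hA : W.Av b
    · subst hbc
      have hAc : W.Av (D.dc b) := (D.av b).mpr hA
      constructor
      · exact ⟨fun _ => ⟨D.dc b, W.wrel_refl _, hAc⟩, fun _ => ⟨b, W.wrel_refl _, hA⟩⟩
      · intro x x' hx hx' w1 w2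
        have e1 := W.eqv2_of_wrel D hx hA (W.wrel_symm w1)
        have e2 : Relation.EqvGen (pairRel (W.pX D) W.tX) ⟨b, hA⟩ ⟨D.dc b, hAc⟩ :=
          EqvGen.rel _ _ (Or.inl rfl)
        have e3 := W.eqv2_of_wrel D hAc hx' w2
        exact (e1.trans _ _ _ e2).trans _ _ _ e3
    · subst hbc
      apply W.phi_of_orb D
      intro x hx
      rw [D.off b hA]
      exact (W.wrel_rf_iff b hx).symm

theorem phi_main (D : W.Dc) {h h' : K}
    (hs : Relation.EqvGen (pairRel W.e D.dc) h h') :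
    (W.MeetsW h ↔ W.MeetsW h') ∧
    ∀ (x x' : K) (hx : W.Av x) (hx' : W.Av x'), W.Wrel h x → W.Wrel h' x' →
      Relation.EqvGen (pairRel (W.pX D) W.tX) ⟨x, hx⟩ ⟨x', hx'⟩ := by
  rw [eqvGen_iff_rtg (pairRel_symm W.he D.invol)] at hs
  induction hs with
  | refl =>
    refine ⟨Iff.rfl, fun x x' hx hx' w1 w2 =>
      W.eqv2_of_wrel D hx hx' (W.wrel_trans (W.wrel_symm w1) w2)⟩
  | tail hab hbc ih =>
    have hstep := W.phi_step D hbc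
    constructor
    · exact ih.1.trans hstep.1
    · intro x x' hx hx' w1 w2
      have hMh : W.MeetsW h := ⟨x, w1, hx⟩
      obtain ⟨y, hy, hyA⟩ := ih.1.mp hMh
      exact (ih.2 x y hx hyA w1 hy).trans _ _ _ (hstep.2 y x' hyA hx' hy w2)

end Walk
end CPZ
namespace CPZ
namespace Walk
open Relation Function

variable {K : Type} [Fintype K] (W : Walk K)

def MeetsQ (D : W.Dc) (c : Quotient (pairSetoid W.e D.dc)) : Prop :=
  ∃ h, W.Av h ∧ Quotient.mk (pairSetoid W.e D.dc) h = c

theorem toCirc_resp (D : W.Dc) (a b : {h : K // W.Av h})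
    (hab : Relation.EqvGen (pairRel (W.pX D) W.tX) a b) :
    Quotient.mk (pairSetoid W.e D.dc) a.1 = Quotient.mk (pairSetoid W.e D.dc) b.1 := by
  induction hab with
  | rel x y hxy =>
    apply Quotient.sound
    rcases hxy with hxy | hxy
    · exact EqvGen.rel _ _ (Or.inr (congrArg Subtype.val hxy))
    · have h1 := W.step_ψ_iter D (W.fret x.1 x.2 + 1) x.1
      rwa [show W.ψ^[W.fret x.1 x.2 + 1] x.1 = y.1 from congrArg Subtype.val hxy] at h1
  | refl x => rfl
  | symm x y _ ih => exact ih.symm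
  | trans x y z _ _ ih1 ih2 => exact ih1.trans ih2

noncomputable def toCirc (D : W.Dc) :
    Quotient (pairSetoid (W.pX D) W.tX) → {c : Quotient (pairSetoid W.e D.dc) // W.MeetsQ D c} :=
  Quotient.lift (fun a => ⟨Quotient.mk _ a.1, a.1, a.2, rfl⟩)
    (fun a b hab => Subtype.ext (W.toCirc_resp D a b hab))

theorem toCirc_bij (D : W.Dc) : Function.Bijective (W.toCirc D) := by
  constructor
  · intro q1 q2
    refine Quotient.inductionOn₂ q1 q2 ?_
    intro a b hab
    have h1 : Quotient.mk (pairSetoid W.e D.dc) a.1 = Quotient.mk (pairSetoid W.e D.dc) b.1 := by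
      exact congrArg Subtype.val hab
    have h2 : Relation.EqvGen (pairRel W.e D.dc) a.1 b.1 := Quotient.exact h1
    have h3 := (W.phi_main D h2).2 a.1 b.1 a.2 b.2 (W.wrel_refl _) (W.wrel_refl _)
    exact Quotient.sound h3
  · rintro ⟨c, h, hA, hc⟩
    exact ⟨Quotient.mk _ ⟨h, hA⟩, Subtype.ext hc⟩

theorem meets_card (D : W.Dc) :
    Nat.card {c : Quotient (pairSetoid W.e D.dc) // W.MeetsQ D c} =
    Nat.card (Quotient (pairSetoid (W.pX D) W.tX)) :=
  (Nat.card_congr (Equiv.ofBijective _ (W.toCirc_bij D))).symm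

/-- classes avoiding Av -/
def AvoidCl (D : W.Dc) (h : K) : Prop :=
  ∀ x, Relation.EqvGen (pairRel W.e D.dc) h x → ¬ W.Av x

theorem transfer' (D1 D2 : W.Dc) {h x : K} (hav : W.AvoidCl D1 h)
    (hs : Relation.EqvGen (pairRel W.e D2.dc) h x) :
    Relation.EqvGen (pairRel W.e D1.dc) h x := by
  rw [eqvGen_iff_rtg (pairRel_symm W.he D2.invol)] at hs
  rw [eqvGen_iff_rtg (pairRel_symm W.he D1.invol)]
  induction hs with
  | refl => exact ReflTransGen.refl
  | @tail b c hab hbc ih =>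
    refine ih.tail ?_
    have hnb : ¬ W.Av b := hav b
      (by rw [eqvGen_iff_rtg (pairRel_symm W.he D1.invol)]; exact ih)
    rcases hbc with h1 | h1
    · exact Or.inl h1
    · exact Or.inr (by rw [D1.off b hnb, ← D2.off b hnb]; exact h1)

theorem avoidCl_transfer (D1 D2 : W.Dc) {h : K} (hav : W.AvoidCl D1 h) :
    W.AvoidCl D2 h :=
  fun x hs => hav x (W.transfer' D1 D2 hav hs)

theorem avoidCl_of_notMeets (D : W.Dc) (c : Quotient (pairSetoid W.e D.dc))
    (hc : ¬ W.MeetsQ D c) : W.AvoidCl D c.out := by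
  intro x hs hA
  exact hc ⟨x, hA, by rw [← c.out_eq]; exact (Quotient.sound hs).symm⟩

noncomputable def avMap (D1 D2 : W.Dc)
    (c : {c : Quotient (pairSetoid W.e D1.dc) // ¬ W.MeetsQ D1 c}) :
    {c : Quotient (pairSetoid W.e D2.dc) // ¬ W.MeetsQ D2 c} := by
  refine ⟨Quotient.mk _ c.1.out, ?_⟩
  rintro ⟨x, hA, hx⟩
  have h2 : Relation.EqvGen (pairRel W.e D2.dc) c.1.out x := (Quotient.exact hx.symm)
  have h3 := W.transfer' D1 D2 (W.avoidCl_of_notMeets D1 c.1 c.2) h2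
  exact (W.avoidCl_of_notMeets D1 c.1 c.2) x h3 hA

theorem avMap_inv (D1 D2 : W.Dc)
    (c : {c : Quotient (pairSetoid W.e D1.dc) // ¬ W.MeetsQ D1 c}) :
    W.avMap D2 D1 (W.avMap D1 D2 c) = c := by
  apply Subtype.ext
  show Quotient.mk _ (Quotient.mk (pairSetoid W.e D2.dc) c.1.out).out = c.1
  have h0 := Quotient.mk_out (s := pairSetoid W.e D2.dc) c.1.out
  have h1 : Relation.EqvGen (pairRel W.e D2.dc) c.1.out
      (Quotient.mk (pairSetoid W.e D2.dc) c.1.out).out := Relation.EqvGen.symm _ _ h0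
  have h2 := W.transfer' D1 D2 (W.avoidCl_of_notMeets D1 c.1 c.2) h1
  calc Quotient.mk (pairSetoid W.e D1.dc) (Quotient.mk (pairSetoid W.e D2.dc) c.1.out).out
      = Quotient.mk (pairSetoid W.e D1.dc) c.1.out := (Quotient.sound h2).symm
    _ = c.1 := c.1.out_eq

theorem avoid_card (D1 D2 : W.Dc) :
    Nat.card {c : Quotient (pairSetoid W.e D1.dc) // ¬ W.MeetsQ D1 c} =
    Nat.card {c : Quotient (pairSetoid W.e D2.dc) // ¬ W.MeetsQ D2 c} :=
  Nat.card_congr ⟨W.avMap D1 D2, W.avMap D2 D1, W.avMap_inv D1 D2, W.avMap_inv D2 D1⟩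

theorem card_split (D : W.Dc) :
    Nat.card (Quotient (pairSetoid W.e D.dc)) =
    Nat.card (Quotient (pairSetoid (W.pX D) W.tX)) +
      Nat.card {c : Quotient (pairSetoid W.e D.dc) // ¬ W.MeetsQ D c} := by
  classical
  have h1 : Nat.card (Quotient (pairSetoid W.e D.dc)) =
      Nat.card ({c : Quotient (pairSetoid W.e D.dc) // W.MeetsQ D c} ⊕
        {c : Quotient (pairSetoid W.e D.dc) // ¬ W.MeetsQ D c}) :=
    (Nat.card_congr (Equiv.sumCompl _)).symm
  rw [h1, Nat.card_sum, W.meets_card D]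

end Walk
end CPZ
namespace CPZ
open Relation

def FPF (X : Type) [DecidableEq X] : Type :=
  {π : X → X // (∀ x, π (π x) = x) ∧ ∀ x, π x ≠ x}

instance (X : Type) [DecidableEq X] [Fintype X] : Fintype (FPF X) :=
  inferInstanceAs (Fintype {π : X → X // (∀ x, π (π x) = x) ∧ ∀ x, π x ≠ x})

set_option linter.unusedSectionVars false

section L1
variable {X : Type} [DecidableEq X] [Fintype X]

def Xres (a b : X) : Type := {x : X // ¬ (x = a ∨ x = b)}

instance (a b : X) : DecidableEq (Xres a b) :=
  inferInstanceAs (DecidableEq {x : X // ¬ (x = a ∨ x = b)})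
instance (a b : X) : Fintype (Xres a b) :=
  inferInstanceAs (Fintype {x : X // ¬ (x = a ∨ x = b)})

def extFun (a b : X) (π' : FPF (Xres a b)) : X → X := fun x =>
  if hx : x = a ∨ x = b then (if x = a then b else a) else (π'.1 ⟨x, hx⟩).1

theorem extFun_a (a b : X) (π' : FPF (Xres a b)) (hab : a ≠ b) : extFun a b π' a = b := by
  simp [extFun]

theorem extFun_b (a b : X) (π' : FPF (Xres a b)) (hab : a ≠ b) : extFun a b π' b = a := by
  have h : ¬ (b = a) := Ne.symm hab
  simp [extFun, h]

theorem extFun_other (a b : X) (π' : FPF (Xres a b)) (x : X)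
    (hx : ¬ (x = a ∨ x = b)) : extFun a b π' x = (π'.1 ⟨x, hx⟩).1 := by
  simp only [extFun]
  rw [dif_neg hx]

def extFPF (a b : X) (hab : a ≠ b) (π' : FPF (Xres a b)) : FPF X := by
  refine ⟨extFun a b π', ?_, ?_⟩
  · intro x
    by_cases hxa : x = a
    · rw [hxa, extFun_a a b π' hab, extFun_b a b π' hab]
    · by_cases hxb : x = b
      · rw [hxb, extFun_b a b π' hab, extFun_a a b π' hab]
      · have hx : ¬ (x = a ∨ x = b) := by tauto
        rw [extFun_other a b π' x hx, extFun_other a b π' _ (π'.1 ⟨x, hx⟩).2]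
        exact congrArg Subtype.val (π'.2.1 ⟨x, hx⟩)
  · intro x
    by_cases hxa : x = a
    · rw [hxa, extFun_a a b π' hab]; exact Ne.symm hab
    · by_cases hxb : x = b
      · rw [hxb, extFun_b a b π' hab]; exact hab
      · have hx : ¬ (x = a ∨ x = b) := by tauto
        rw [extFun_other a b π' x hx]
        intro hc
        exact π'.2.2 ⟨x, hx⟩ (Subtype.ext hc)

theorem ext_val_a {a b : X} (hab : a ≠ b) (π' : FPF (Xres a b)) :
    (extFPF a b hab π').1 a = b := extFun_a a b π' hab

theorem ext_val_b {a b : X} (hab : a ≠ b) (π' : FPF (Xres a b)) :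
    (extFPF a b hab π').1 b = a := extFun_b a b π' hab

theorem ext_val_other {a b : X} (hab : a ≠ b) (π' : FPF (Xres a b)) (x : X)
    (hx : ¬ (x = a ∨ x = b)) : (extFPF a b hab π').1 x = (π'.1 ⟨x, hx⟩).1 :=
  extFun_other a b π' x hx

def resFPF (a b : X) (π : FPF X) (hab : π.1 a = b) : FPF (Xres a b) := by
  refine ⟨fun x => ⟨π.1 x.1, ?_⟩, ?_, ?_⟩
  · rintro (hc | hc)
    · exact x.2 (Or.inr (by rw [← π.2.1 x.1, hc, hab]))
    · exact x.2 (Or.inl (by rw [← π.2.1 x.1, hc, ← hab, π.2.1]))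
  · intro x; exact Subtype.ext (π.2.1 x.1)
  · intro x hc; exact π.2.2 x.1 (congrArg Subtype.val hc)

def fiberEquiv (a b : X) (hab : a ≠ b) : {π : FPF X // π.1 a = b} ≃ FPF (Xres a b) where
  toFun := fun π => resFPF a b π.1 π.2
  invFun := fun π' => ⟨extFPF a b hab π', ext_val_a hab π'⟩
  left_inv := by
    rintro ⟨π, hπ⟩
    apply Subtype.ext; apply Subtype.ext; funext x
    show (extFPF a b hab (resFPF a b π hπ)).1 x = π.1 x
    by_cases hxa : x = a
    · rw [hxa, ext_val_a hab, hπ]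
    · by_cases hxb : x = b
      · rw [hxb, ext_val_b hab, ← hπ, π.2.1]
      · have hx : ¬ (x = a ∨ x = b) := by tauto
        rw [ext_val_other hab _ x hx]
        rfl
  right_inv := by
    intro π'
    apply Subtype.ext; funext x
    apply Subtype.ext
    show (extFPF a b hab π').1 x.1 = (π'.1 x).1
    rw [ext_val_other hab π' x.1 x.2]
    rfl

end L1
end CPZ
namespace CPZ
open Relation

section L1b
set_option linter.unusedSectionVars false
variable {X : Type} [DecidableEq X] [Fintype X]

def tauLoop (a b : X) (τ : X → X) (hτi : ∀ x, τ (τ x) = x) (hτf : ∀ x, τ x ≠ x)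
    (hb : τ a = b) : FPF (Xres a b) := by
  refine ⟨fun x => ⟨τ x.1, ?_⟩, ?_, ?_⟩
  · rintro (hc | hc)
    · exact x.2 (Or.inr (by rw [← hτi x.1, hc, hb]))
    · exact x.2 (Or.inl (by rw [← hτi x.1, hc, ← hb, hτi]))
  · intro x; exact Subtype.ext (hτi x.1)
  · intro x hc; exact hτf x.1 (congrArg Subtype.val hc)

section loop
variable (a b : X) (hab : a ≠ b) (τ : X → X) (hτi : ∀ x, τ (τ x) = x)
  (hτf : ∀ x, τ x ≠ x) (hb : τ a = b) (π' : FPF (Xres a b))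

def loopF : X → Quotient (pairSetoid π'.1 (tauLoop a b τ hτi hτf hb).1) ⊕ Unit :=
  fun x => if hx : x = a ∨ x = b then Sum.inr Unit.unit
    else Sum.inl (Quotient.mk _ ⟨x, hx⟩)

theorem loopF_resp : ∀ x y, pairRel (extFPF a b hab π').1 τ x y →
    loopF a b τ hτi hτf hb π' x = loopF a b τ hτi hτf hb π' y := by
  intro x y hxy
  rcases hxy with hπ | hτ
  · by_cases hx : x = a ∨ x = b
    · have hy : y = a ∨ y = b := by
        rcases hx with h | h
        · rw [h, ext_val_a hab] at hπ; exact Or.inr hπ.symm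
        · rw [h, ext_val_b hab] at hπ; exact Or.inl hπ.symm
      simp only [loopF, dif_pos hx, dif_pos hy]
    · rw [ext_val_other hab π' x hx] at hπ
      have hy : ¬ (y = a ∨ y = b) := by rw [← hπ]; exact (π'.1 ⟨x, hx⟩).2
      simp only [loopF, dif_neg hx, dif_neg hy]
      congr 1
      exact Quotient.sound (EqvGen.rel _ _ (Or.inl (Subtype.ext hπ)))
  · by_cases hx : x = a ∨ x = b
    · have hy : y = a ∨ y = b := by
        rcases hx with h | h
        · rw [h, hb] at hτ; exact Or.inr hτ.symm
        · rw [h] at hτ; refine Or.inl ?_; rw [← hτ, ← hb, hτi]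
      simp only [loopF, dif_pos hx, dif_pos hy]
    · have hy : ¬ (y = a ∨ y = b) := by
        rintro (hc | hc)
        · exact hx (Or.inr (by rw [← hτi x, hτ, hc, hb]))
        · exact hx (Or.inl (by rw [← hτi x, hτ, hc, ← hb, hτi]))
      simp only [loopF, dif_neg hx, dif_neg hy]
      congr 1
      exact Quotient.sound (EqvGen.rel _ _ (Or.inr (Subtype.ext hτ)))

theorem loopF_resp' : ∀ x y, Relation.EqvGen (pairRel (extFPF a b hab π').1 τ) x y →
    loopF a b τ hτi hτf hb π' x = loopF a b τ hτi hτf hb π' y := by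
  intro x y h
  induction h with
  | rel x y hxy => exact loopF_resp a b hab τ hτi hτf hb π' x y hxy
  | refl x => rfl
  | symm x y _ ih => exact ih.symm
  | trans x y z _ _ ih1 ih2 => exact ih1.trans ih2

noncomputable def loopFq :
    Quotient (pairSetoid (extFPF a b hab π').1 τ) →
      Quotient (pairSetoid π'.1 (tauLoop a b τ hτi hτf hb).1) ⊕ Unit :=
  Quotient.lift (loopF a b τ hτi hτf hb π') (loopF_resp' a b hab τ hτi hτf hb π')

theorem loopG_resp' : ∀ (x y : Xres a b),
    Relation.EqvGen (pairRel π'.1 (tauLoop a b τ hτi hτf hb).1) x y →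
    Quotient.mk (pairSetoid (extFPF a b hab π').1 τ) x.1 =
    Quotient.mk (pairSetoid (extFPF a b hab π').1 τ) y.1 := by
  intro x y h
  induction h with
  | rel x y hxy =>
    apply Quotient.sound
    rcases hxy with hp | ht
    · refine EqvGen.rel _ _ (Or.inl ?_)
      rw [ext_val_other hab π' x.1 x.2]
      exact congrArg Subtype.val hp
    · exact EqvGen.rel _ _ (Or.inr (congrArg Subtype.val ht))
  | refl x => rfl
  | symm x y _ ih => exact ih.symm
  | trans x y z _ _ ih1 ih2 => exact ih1.trans ih2

noncomputable def loopGq :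
    Quotient (pairSetoid π'.1 (tauLoop a b τ hτi hτf hb).1) ⊕ Unit →
      Quotient (pairSetoid (extFPF a b hab π').1 τ) :=
  Sum.elim (Quotient.lift (fun x' => Quotient.mk _ x'.1) (loopG_resp' a b hab τ hτi hτf hb π'))
    (fun _ => Quotient.mk _ a)

theorem count_loop :
    Nat.card (Quotient (pairSetoid (extFPF a b hab π').1 τ)) =
      Nat.card (Quotient (pairSetoid π'.1 (tauLoop a b τ hτi hτf hb).1)) + 1 := by
  have heq : Nat.card (Quotient (pairSetoid (extFPF a b hab π').1 τ)) =
      Nat.card (Quotient (pairSetoid π'.1 (tauLoop a b τ hτi hτf hb).1) ⊕ Unit) := by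
    apply Nat.card_congr
    refine ⟨loopFq a b hab τ hτi hτf hb π', loopGq a b hab τ hτi hτf hb π', ?_, ?_⟩
    · intro q
      refine Quotient.inductionOn q ?_
      intro x
      by_cases hx : x = a ∨ x = b
      · have h1 : loopFq a b hab τ hτi hτf hb π' (Quotient.mk _ x) = Sum.inr Unit.unit := by
          show loopF a b τ hτi hτf hb π' x = _
          simp only [loopF, dif_pos hx]
        rw [h1]
        show Quotient.mk _ a = Quotient.mk _ x
        rcases hx with h | h
        · rw [h]
        · rw [h]
          exact Quotient.sound (EqvGen.rel _ _ (Or.inl (ext_val_a hab π')))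
      · have h1 : loopFq a b hab τ hτi hτf hb π' (Quotient.mk _ x) =
            Sum.inl (Quotient.mk _ ⟨x, hx⟩) := by
          show loopF a b τ hτi hτf hb π' x = _
          simp only [loopF, dif_neg hx]
        rw [h1]
        rfl
    · intro s
      rcases s with q | u
      · refine Quotient.inductionOn q ?_
        intro x'
        show loopFq a b hab τ hτi hτf hb π' (Quotient.mk _ x'.1) = _
        show loopF a b τ hτi hτf hb π' x'.1 = _
        simp only [loopF, dif_neg x'.2]
        rfl
      · show loopFq a b hab τ hτi hτf hb π' (Quotient.mk _ a) = _
        show loopF a b τ hτi hτf hb π' a = _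
        rw [loopF]
        rw [dif_pos (Or.inl rfl)]
  rw [heq, Nat.card_sum]
  simp
end loop
end L1b
end CPZ
namespace CPZ
open Relation

section L1c
set_option linter.unusedSectionVars false
variable {X : Type} [DecidableEq X] [Fintype X]

theorem mem_ta (a b : X) (τ : X → X) (hτi : ∀ x, τ (τ x) = x) (hτf : ∀ x, τ x ≠ x)
    (hba : b ≠ τ a) : ¬ (τ a = a ∨ τ a = b) := by
  rintro (hc | hc)
  · exact hτf a hc
  · exact hba hc.symm

theorem mem_tb (a b : X) (τ : X → X) (hτi : ∀ x, τ (τ x) = x) (hτf : ∀ x, τ x ≠ x)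
    (hba : b ≠ τ a) : ¬ (τ b = a ∨ τ b = b) := by
  rintro (hc | hc)
  · exact hba (by rw [← hc, hτi])
  · exact hτf b hc

theorem ta_ne_tb (a b : X) (hab : a ≠ b) (τ : X → X) (hτi : ∀ x, τ (τ x) = x) :
    τ a ≠ τ b := fun hc => hab (by rw [← hτi a, hc, hτi])

def rerFun (a b : X) (τ : X → X) (hτi : ∀ x, τ (τ x) = x) (hτf : ∀ x, τ x ≠ x)
    (hba : b ≠ τ a) : Xres a b → Xres a b := fun x =>
  if h1 : x.1 = τ a then ⟨τ b, mem_tb a b τ hτi hτf hba⟩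
  else if h2 : x.1 = τ b then ⟨τ a, mem_ta a b τ hτi hτf hba⟩
  else ⟨τ x.1, by
    rintro (hc | hc)
    · exact h1 (by rw [← hτi x.1, hc])
    · exact h2 (by rw [← hτi x.1, hc])⟩

theorem rerFun_ta (a b : X) (τ : X → X) (hτi : ∀ x, τ (τ x) = x) (hτf : ∀ x, τ x ≠ x)
    (hba : b ≠ τ a) (x : Xres a b) (h : x.1 = τ a) :
    (rerFun a b τ hτi hτf hba x).1 = τ b := by
  erw [rerFun, dif_pos h]

theorem rerFun_tb (a b : X) (τ : X → X) (hτi : ∀ x, τ (τ x) = x) (hτf : ∀ x, τ x ≠ x)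
    (hba : b ≠ τ a) (x : Xres a b) (h1 : ¬ x.1 = τ a) (h : x.1 = τ b) :
    (rerFun a b τ hτi hτf hba x).1 = τ a := by
  erw [rerFun, dif_neg h1, dif_pos h]

theorem rerFun_other (a b : X) (τ : X → X) (hτi : ∀ x, τ (τ x) = x) (hτf : ∀ x, τ x ≠ x)
    (hba : b ≠ τ a) (x : Xres a b) (h1 : ¬ x.1 = τ a) (h2 : ¬ x.1 = τ b) :
    (rerFun a b τ hτi hτf hba x).1 = τ x.1 := by
  erw [rerFun, dif_neg h1, dif_neg h2]

def tauRer (a b : X) (hab : a ≠ b) (τ : X → X) (hτi : ∀ x, τ (τ x) = x) (hτf : ∀ x, τ x ≠ x)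
    (hba : b ≠ τ a) : FPF (Xres a b) := by
  refine ⟨rerFun a b τ hτi hτf hba, ?_, ?_⟩
  · intro x
    apply Subtype.ext
    by_cases h1 : x.1 = τ a
    · have v1 : (rerFun a b τ hτi hτf hba x).1 = τ b := rerFun_ta a b τ hτi hτf hba x h1
      rw [rerFun_tb a b τ hτi hτf hba _ (by rw [v1]; exact (ta_ne_tb a b hab τ hτi).symm) v1, h1]
    · by_cases h2 : x.1 = τ b
      · have v1 : (rerFun a b τ hτi hτf hba x).1 = τ a :=
          rerFun_tb a b τ hτi hτf hba x h1 h2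
        rw [rerFun_ta a b τ hτi hτf hba _ v1, h2]
      · have v1 : (rerFun a b τ hτi hτf hba x).1 = τ x.1 :=
          rerFun_other a b τ hτi hτf hba x h1 h2
        have w1 : ¬ (rerFun a b τ hτi hτf hba x).1 = τ a := by
          rw [v1]; intro hc; exact x.2 (Or.inl (by rw [← hτi x.1, hc, hτi]))
        have w2 : ¬ (rerFun a b τ hτi hτf hba x).1 = τ b := by
          rw [v1]; intro hc; exact x.2 (Or.inr (by rw [← hτi x.1, hc, hτi]))
        rw [rerFun_other a b τ hτi hτf hba _ w1 w2, v1, hτi]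
  · intro x hc
    have hc' := congrArg Subtype.val hc
    by_cases h1 : x.1 = τ a
    · rw [rerFun_ta a b τ hτi hτf hba x h1, h1] at hc'
      exact (ta_ne_tb a b hab τ hτi).symm hc'
    · by_cases h2 : x.1 = τ b
      · rw [rerFun_tb a b τ hτi hτf hba x h1 h2, h2] at hc'
        exact ta_ne_tb a b hab τ hτi hc'
      · rw [rerFun_other a b τ hτi hτf hba x h1 h2] at hc'
        exact hτf x.1 hc'

def gRer (a b : X) (τ : X → X) (hτi : ∀ x, τ (τ x) = x) (hτf : ∀ x, τ x ≠ x)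
    (hba : b ≠ τ a) : X → Xres a b := fun x =>
  if x = a then ⟨τ a, mem_ta a b τ hτi hτf hba⟩
  else if x = b then ⟨τ b, mem_tb a b τ hτi hτf hba⟩
  else if hx : x = a ∨ x = b then ⟨τ a, mem_ta a b τ hτi hτf hba⟩ else ⟨x, hx⟩

theorem gRer_a (a b : X) (τ : X → X) (hτi : ∀ x, τ (τ x) = x) (hτf : ∀ x, τ x ≠ x)
    (hba : b ≠ τ a) : gRer a b τ hτi hτf hba a = ⟨τ a, mem_ta a b τ hτi hτf hba⟩ := by
  rw [gRer]; simp; rfl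

theorem gRer_b (a b : X) (hab : a ≠ b) (τ : X → X) (hτi : ∀ x, τ (τ x) = x)
    (hτf : ∀ x, τ x ≠ x) (hba : b ≠ τ a) :
    gRer a b τ hτi hτf hba b = ⟨τ b, mem_tb a b τ hτi hτf hba⟩ := by
  erw [gRer, if_neg (Ne.symm hab), if_pos rfl]

theorem gRer_other (a b : X) (τ : X → X) (hτi : ∀ x, τ (τ x) = x) (hτf : ∀ x, τ x ≠ x)
    (hba : b ≠ τ a) (x : X) (hx : ¬ (x = a ∨ x = b)) :
    gRer a b τ hτi hτf hba x = ⟨x, hx⟩ := by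
  erw [gRer, if_neg (fun hc => hx (Or.inl hc)), if_neg (fun hc => hx (Or.inr hc)), dif_neg hx]

end L1c
end CPZ
namespace CPZ
open Relation

section L1d
set_option linter.unusedSectionVars false
variable {X : Type} [DecidableEq X] [Fintype X]

theorem tauRer_val (a b : X) (hab : a ≠ b) (τ : X → X) (hτi : ∀ x, τ (τ x) = x)
    (hτf : ∀ x, τ x ≠ x) (hba : b ≠ τ a) :
    (tauRer a b hab τ hτi hτf hba).1 = rerFun a b τ hτi hτf hba := rfl

theorem rerG_resp (a b : X) (hab : a ≠ b) (τ : X → X) (hτi : ∀ x, τ (τ x) = x)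
    (hτf : ∀ x, τ x ≠ x) (hba : b ≠ τ a) (π' : FPF (Xres a b)) :
    ∀ x y, pairRel (extFPF a b hab π').1 τ x y →
    Quotient.mk (pairSetoid π'.1 (tauRer a b hab τ hτi hτf hba).1) (gRer a b τ hτi hτf hba x) =
    Quotient.mk (pairSetoid π'.1 (tauRer a b hab τ hτi hτf hba).1) (gRer a b τ hτi hτf hba y) := by
  intro x y hxy
  rcases hxy with hπ | hτ
  · by_cases hx : x = a ∨ x = b
    · rcases hx with h | h
      · have hy : y = b := by rw [h, ext_val_a hab] at hπ; exact hπ.symm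
        rw [h, hy, gRer_a a b τ hτi hτf hba, gRer_b a b hab τ hτi hτf hba]
        apply Quotient.sound
        refine Relation.EqvGen.rel _ _ (Or.inr (Subtype.ext ?_))
        exact rerFun_ta a b τ hτi hτf hba _ rfl
      · have hy : y = a := by rw [h, ext_val_b hab] at hπ; exact hπ.symm
        rw [h, hy, gRer_a a b τ hτi hτf hba, gRer_b a b hab τ hτi hτf hba]
        apply Quotient.sound
        refine Relation.EqvGen.rel _ _ (Or.inr (Subtype.ext ?_))
        rw [tauRer_val]
        exact rerFun_tb a b τ hτi hτf hba _ (Ne.symm (ta_ne_tb a b hab τ hτi)) rfl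
    · rw [ext_val_other hab π' x hx] at hπ
      have hy : ¬ (y = a ∨ y = b) := by rw [← hπ]; exact (π'.1 ⟨x, hx⟩).2
      rw [gRer_other a b τ hτi hτf hba x hx, gRer_other a b τ hτi hτf hba y hy]
      exact Quotient.sound (Relation.EqvGen.rel _ _ (Or.inl (Subtype.ext hπ)))
  · by_cases hxa : x = a
    · have hy : y = τ a := by rw [← hτ, hxa]
      have hmem := mem_ta a b τ hτi hτf hba
      rw [hxa, hy, gRer_a a b τ hτi hτf hba, gRer_other a b τ hτi hτf hba (τ a) hmem]
    · by_cases hxb : x = b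
      · have hy : y = τ b := by rw [← hτ, hxb]
        have hmem := mem_tb a b τ hτi hτf hba
        rw [hxb, hy, gRer_b a b hab τ hτi hτf hba, gRer_other a b τ hτi hτf hba (τ b) hmem]
      · by_cases hxta : x = τ a
        · have hy : y = a := by rw [← hτ, hxta, hτi]
          have hmem : ¬ (x = a ∨ x = b) := by tauto
          rw [hy, gRer_other a b τ hτi hτf hba x hmem, gRer_a a b τ hτi hτf hba]
          congr 1
          exact Subtype.ext hxta
        · by_cases hxtb : x = τ b
          · have hy : y = b := by rw [← hτ, hxtb, hτi]
            have hmem : ¬ (x = a ∨ x = b) := by tauto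
            rw [hy, gRer_other a b τ hτi hτf hba x hmem, gRer_b a b hab τ hτi hτf hba]
            congr 1
            exact Subtype.ext hxtb
          · have hmem : ¬ (x = a ∨ x = b) := by
              rintro (hc | hc)
              · exact hxa hc
              · exact hxb hc
            have hy : ¬ (y = a ∨ y = b) := by
              rintro (hc | hc)
              · exact hxta (by rw [← hτi x, hτ, hc])
              · exact hxtb (by rw [← hτi x, hτ, hc])
            rw [gRer_other a b τ hτi hτf hba x hmem, gRer_other a b τ hτi hτf hba y hy]
            apply Quotient.sound
            refine Relation.EqvGen.rel _ _ (Or.inr (Subtype.ext ?_))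
            rw [tauRer_val, rerFun_other a b τ hτi hτf hba ⟨x, hmem⟩ hxta hxtb]
            exact hτ
  
theorem rerG_resp' (a b : X) (hab : a ≠ b) (τ : X → X) (hτi : ∀ x, τ (τ x) = x)
    (hτf : ∀ x, τ x ≠ x) (hba : b ≠ τ a) (π' : FPF (Xres a b)) :
    ∀ x y, Relation.EqvGen (pairRel (extFPF a b hab π').1 τ) x y →
    Quotient.mk (pairSetoid π'.1 (tauRer a b hab τ hτi hτf hba).1) (gRer a b τ hτi hτf hba x) =
    Quotient.mk (pairSetoid π'.1 (tauRer a b hab τ hτi hτf hba).1) (gRer a b τ hτi hτf hba y) := by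
  intro x y h
  induction h with
  | rel x y hxy => exact rerG_resp a b hab τ hτi hτf hba π' x y hxy
  | refl x => rfl
  | symm x y _ ih => exact ih.symm
  | trans x y z _ _ ih1 ih2 => exact ih1.trans ih2

theorem rerI_resp' (a b : X) (hab : a ≠ b) (τ : X → X) (hτi : ∀ x, τ (τ x) = x)
    (hτf : ∀ x, τ x ≠ x) (hba : b ≠ τ a) (π' : FPF (Xres a b)) :
    ∀ (x y : Xres a b),
      Relation.EqvGen (pairRel π'.1 (tauRer a b hab τ hτi hτf hba).1) x y →
    Quotient.mk (pairSetoid (extFPF a b hab π').1 τ) x.1 =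
    Quotient.mk (pairSetoid (extFPF a b hab π').1 τ) y.1 := by
  intro x y h
  induction h with
  | refl x => rfl
  | symm x y _ ih => exact ih.symm
  | trans x y z _ _ ih1 ih2 => exact ih1.trans ih2
  | rel x y hxy =>
    rcases hxy with hp | ht
    · apply Quotient.sound
      refine Relation.EqvGen.rel _ _ (Or.inl ?_)
      rw [ext_val_other hab π' x.1 x.2]
      exact congrArg Subtype.val hp
    · have htv := congrArg Subtype.val ht
      rw [tauRer_val] at htv
      by_cases h1 : x.1 = τ a
      · have hy : y.1 = τ b := by rw [← htv, rerFun_ta a b τ hτi hτf hba x h1]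
        apply Quotient.sound
        rw [h1, hy]
        have e1 : Relation.EqvGen (pairRel (extFPF a b hab π').1 τ) (τ a) a :=
          Relation.EqvGen.rel _ _ (Or.inr (hτi a))
        have e2 : Relation.EqvGen (pairRel (extFPF a b hab π').1 τ) a b :=
          Relation.EqvGen.rel _ _ (Or.inl (ext_val_a hab π'))
        have e3 : Relation.EqvGen (pairRel (extFPF a b hab π').1 τ) b (τ b) :=
          Relation.EqvGen.rel _ _ (Or.inr rfl)
        exact (e1.trans _ _ _ e2).trans _ _ _ e3
      · by_cases h2 : x.1 = τ b
        · have hy : y.1 = τ a := by rw [← htv, rerFun_tb a b τ hτi hτf hba x h1 h2]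
          apply Quotient.sound
          rw [h2, hy]
          have e1 : Relation.EqvGen (pairRel (extFPF a b hab π').1 τ) (τ b) b :=
            Relation.EqvGen.rel _ _ (Or.inr (hτi b))
          have e2 : Relation.EqvGen (pairRel (extFPF a b hab π').1 τ) b a :=
            Relation.EqvGen.rel _ _ (Or.inl (ext_val_b hab π'))
          have e3 : Relation.EqvGen (pairRel (extFPF a b hab π').1 τ) a (τ a) :=
            Relation.EqvGen.rel _ _ (Or.inr rfl)
          exact (e1.trans _ _ _ e2).trans _ _ _ e3
        · have hy : y.1 = τ x.1 := by rw [← htv, rerFun_other a b τ hτi hτf hba x h1 h2]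
          apply Quotient.sound
          rw [hy]
          exact Relation.EqvGen.rel _ _ (Or.inr rfl)

theorem count_reroute (a b : X) (hab : a ≠ b) (τ : X → X) (hτi : ∀ x, τ (τ x) = x)
    (hτf : ∀ x, τ x ≠ x) (hba : b ≠ τ a) (π' : FPF (Xres a b)) :
    Nat.card (Quotient (pairSetoid (extFPF a b hab π').1 τ)) =
    Nat.card (Quotient (pairSetoid π'.1 (tauRer a b hab τ hτi hτf hba).1)) := by
  apply Nat.card_congr
  refine ⟨Quotient.lift
      (fun x => Quotient.mk (pairSetoid π'.1 (tauRer a b hab τ hτi hτf hba).1)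
        (gRer a b τ hτi hτf hba x))
      (rerG_resp' a b hab τ hτi hτf hba π'),
    Quotient.lift (fun x' => Quotient.mk (pairSetoid (extFPF a b hab π').1 τ) x'.1)
      (rerI_resp' a b hab τ hτi hτf hba π'), ?_, ?_⟩
  · intro q
    refine Quotient.inductionOn q ?_
    intro x
    show Quotient.mk _ (gRer a b τ hτi hτf hba x).1 = Quotient.mk _ x
    by_cases hxa : x = a
    · rw [hxa, gRer_a a b τ hτi hτf hba]
      exact Quotient.sound (Relation.EqvGen.rel _ _ (Or.inr (hτi a)))
    · by_cases hxb : x = b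
      · rw [hxb, gRer_b a b hab τ hτi hτf hba]
        exact Quotient.sound (Relation.EqvGen.rel _ _ (Or.inr (hτi b)))
      · have hx : ¬ (x = a ∨ x = b) := by tauto
        rw [gRer_other a b τ hτi hτf hba x hx]
  · intro q'
    refine Quotient.inductionOn q' ?_
    intro x'
    show Quotient.mk _ (gRer a b τ hτi hτf hba x'.1) = Quotient.mk _ x'
    rw [gRer_other a b τ hτi hτf hba x'.1 x'.2]
    rfl

end L1d
end CPZ
namespace CPZ
open Relation Polynomial

section L1e
set_option linter.unusedSectionVars false
variable {X : Type} [DecidableEq X] [Fintype X]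

theorem card_Xres (a b : X) (hab : a ≠ b) :
    Fintype.card (Xres a b) = Fintype.card X - 2 := by
  have h1 : Fintype.card (Xres a b) =
      Fintype.card X - Fintype.card {x : X // x = a ∨ x = b} :=
    Fintype.card_subtype_compl _
  have h2 : Fintype.card {x : X // x = a ∨ x = b} = 2 := by
    rw [Fintype.card_subtype]
    have h3 : Finset.univ.filter (fun x : X => x = a ∨ x = b) = {a, b} := by
      ext x; simp [Finset.mem_insert]
    rw [h3]
    rw [Finset.card_insert_of_notMem (by simp [hab]), Finset.card_singleton]
  rw [h1, h2]

end L1e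

theorem L1 (n : ℕ) : ∀ (X : Type) [DecidableEq X] [Fintype X], Fintype.card X = 2 * n →
    ∀ (τ : X → X), (∀ x, τ (τ x) = x) → (∀ x, τ x ≠ x) →
    (∑ π : FPF X, (Polynomial.X : Polynomial ℤ) ^ Nat.card (Quotient (pairSetoid π.1 τ)))
      = ∏ j ∈ Finset.range n, (Polynomial.X + Polynomial.C (2 * (j : ℤ))) := by
  induction n with
  | zero =>
    intro X _ _ hcard τ hτi hτf
    have hempty : IsEmpty X := Fintype.card_eq_zero_iff.mp (by omega)
    have hFE : ∀ π : FPF X, Nat.card (Quotient (pairSetoid π.1 τ)) = 0 := by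
      intro π
      have : IsEmpty (Quotient (pairSetoid π.1 τ)) :=
        ⟨fun q => Quotient.inductionOn (motive := fun _ => False) q
          (fun x => (IsEmpty.false x).elim)⟩
      exact Nat.card_of_isEmpty
    have hone : Fintype.card (FPF X) = 1 := by
      apply Fintype.card_eq_one_iff.mpr
      refine ⟨⟨fun x => x, fun x => (IsEmpty.false x).elim, fun x => (IsEmpty.false x).elim⟩,
        fun π => Subtype.ext (funext fun x => (IsEmpty.false x).elim)⟩
    calc ∑ π : FPF X, (Polynomial.X : Polynomial ℤ) ^ Nat.card (Quotient (pairSetoid π.1 τ))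
        = ∑ _π : FPF X, (1 : Polynomial ℤ) :=
          Finset.sum_congr rfl (fun π _ => by rw [hFE π, pow_zero])
      _ = 1 := by rw [Finset.sum_const, Finset.card_univ, hone]; simp
      _ = _ := by rw [Finset.prod_range_zero]
  | succ n ih =>
    intro X _ _ hcard τ hτi hτf
    have hne : Nonempty X := Fintype.card_pos_iff.mp (by omega)
    obtain ⟨a⟩ := hne
    set F : FPF X → Polynomial ℤ :=
      fun π => (Polynomial.X : Polynomial ℤ) ^ Nat.card (Quotient (pairSetoid π.1 τ)) with hF
    set P : Polynomial ℤ :=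
      ∏ j ∈ Finset.range n, (Polynomial.X + Polynomial.C (2 * (j : ℤ))) with hP
    have hS : ∀ b : X, b ≠ a →
        (∑ π ∈ Finset.univ.filter (fun π : FPF X => π.1 a = b), F π) =
          (if b = τ a then Polynomial.X * P else P) := by
      intro b hbna
      have hab : a ≠ b := hbna.symm
      have hXcard : Fintype.card (Xres a b) = 2 * n := by
        rw [card_Xres a b hab, hcard]; omega
      have hconv : (∑ π ∈ Finset.univ.filter (fun π : FPF X => π.1 a = b), F π) =
          ∑ π' : FPF (Xres a b), F (extFPF a b hab π') := by
        rw [Finset.sum_subtype (p := fun π : FPF X => π.1 a = b) _ (by intro π; simp) F]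
        rw [← Equiv.sum_comp (fiberEquiv a b hab).symm
          (fun σ : {π : FPF X // π.1 a = b} => F σ.1)]
        rfl
      rw [hconv]
      by_cases hbt : b = τ a
      · have hb : τ a = b := hbt.symm
        rw [if_pos hbt]
        have hcnt : ∀ π' : FPF (Xres a b), F (extFPF a b hab π') =
            Polynomial.X * (Polynomial.X : Polynomial ℤ) ^
              Nat.card (Quotient (pairSetoid π'.1 (tauLoop a b τ hτi hτf hb).1)) := by
          intro π'
          show (Polynomial.X : Polynomial ℤ) ^
              Nat.card (Quotient (pairSetoid (extFPF a b hab π').1 τ)) = _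
          rw [count_loop a b hab τ hτi hτf hb π', pow_succ, mul_comm]
        rw [Finset.sum_congr rfl (fun π' _ => hcnt π'), ← Finset.mul_sum]
        congr 1
        exact ih (Xres a b) hXcard (tauLoop a b τ hτi hτf hb).1
          (tauLoop a b τ hτi hτf hb).2.1 (tauLoop a b τ hτi hτf hb).2.2
      · rw [if_neg hbt]
        have hba2 : b ≠ τ a := hbt
        have hcnt : ∀ π' : FPF (Xres a b), F (extFPF a b hab π') =
            (Polynomial.X : Polynomial ℤ) ^
              Nat.card (Quotient (pairSetoid π'.1 (tauRer a b hab τ hτi hτf hba2).1)) := by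
          intro π'
          show (Polynomial.X : Polynomial ℤ) ^
              Nat.card (Quotient (pairSetoid (extFPF a b hab π').1 τ)) = _
          rw [count_reroute a b hab τ hτi hτf hba2 π']
        rw [Finset.sum_congr rfl (fun π' _ => hcnt π')]
        exact ih (Xres a b) hXcard (tauRer a b hab τ hτi hτf hba2).1
          (tauRer a b hab τ hτi hτf hba2).2.1 (tauRer a b hab τ hτi hτf hba2).2.2
    have hfib : (∑ π : FPF X, F π) =
        ∑ b : X, ∑ π ∈ Finset.univ.filter (fun π : FPF X => π.1 a = b), F π :=
      (Finset.sum_fiberwise_of_maps_to (fun π _ => Finset.mem_univ (π.1 a)) F).symm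
    have ha0 : (∑ π ∈ Finset.univ.filter (fun π : FPF X => π.1 a = a), F π) = 0 := by
      have : Finset.univ.filter (fun π : FPF X => π.1 a = a) = ∅ := by
        apply Finset.filter_false_of_mem
        intro π _
        exact π.2.2 a
      rw [this, Finset.sum_empty]
    have hta_mem : τ a ∈ Finset.univ.erase a := Finset.mem_erase.mpr ⟨hτf a, Finset.mem_univ _⟩
    have hsplit : (∑ b : X, ∑ π ∈ Finset.univ.filter (fun π : FPF X => π.1 a = b), F π) =
        ∑ b ∈ Finset.univ.erase a,
          ∑ π ∈ Finset.univ.filter (fun π : FPF X => π.1 a = b), F π := by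
      rw [← Finset.sum_erase_add Finset.univ _ (Finset.mem_univ a), ha0, add_zero]
    rw [hfib, hsplit]
    rw [← Finset.sum_erase_add (Finset.univ.erase a) _ hta_mem]
    have hSta : (∑ π ∈ Finset.univ.filter (fun π : FPF X => π.1 a = τ a), F π) =
        Polynomial.X * P := by
      have h := hS (τ a) (hτf a)
      rw [if_pos rfl] at h
      exact h
    have hSother : ∀ b ∈ (Finset.univ.erase a).erase (τ a),
        (∑ π ∈ Finset.univ.filter (fun π : FPF X => π.1 a = b), F π) = P := by
      intro b hb
      obtain ⟨hb1, hb2⟩ := Finset.mem_erase.mp hb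
      obtain ⟨hb3, _⟩ := Finset.mem_erase.mp hb2
      rw [hS b hb3, if_neg hb1]
    rw [hSta, Finset.sum_congr rfl hSother, Finset.sum_const]
    have hcard2 : ((Finset.univ.erase a).erase (τ a)).card = 2 * n := by
      rw [Finset.card_erase_of_mem hta_mem, Finset.card_erase_of_mem (Finset.mem_univ a),
        Finset.card_univ, hcard]
      omega
    rw [hcard2, Finset.prod_range_succ]
    have hc : ((2 * n : ℕ) : Polynomial ℤ) = Polynomial.C (2 * (n : ℤ)) := by
      rw [← Polynomial.C_eq_natCast]
      congr 1
    rw [nsmul_eq_mul, hc]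
    ring

end CPZ
namespace CPZ
open Relation

section GraphSide
variable (G : HGraph) (v : G.V)

abbrev Xv : Type := {h : G.H // G.vtx h = v}
abbrev Yv : Type := {h : G.H // ¬ (G.vtx h = v)}

abbrev RHO : Type :=
  {ρ : Yv G v → Yv G v //
    (∀ y, ρ (ρ y) = y) ∧ (∀ y, ρ y ≠ y) ∧ ∀ y, G.vtx (ρ y).1 = G.vtx y.1}

def rfFun (ρ : RHO G v) : G.H → G.H := fun h =>
  if hA : G.vtx h = v then h else (ρ.1 ⟨h, hA⟩).1

theorem rfFun_av (ρ : RHO G v) (h : G.H) (hA : G.vtx h = v) : rfFun G v ρ h = h := by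
  rw [rfFun, dif_pos hA]

theorem rfFun_nav (ρ : RHO G v) (h : G.H) (hA : ¬ G.vtx h = v) :
    rfFun G v ρ h = (ρ.1 ⟨h, hA⟩).1 := by
  rw [rfFun, dif_neg hA]

theorem rfFun_vtx (ρ : RHO G v) (h : G.H) : G.vtx (rfFun G v ρ h) = G.vtx h := by
  by_cases hA : G.vtx h = v
  · rw [rfFun_av G v ρ h hA]
  · rw [rfFun_nav G v ρ h hA]
    exact ρ.2.2.2 ⟨h, hA⟩

def Wk (hvac : G.IsVacuum) (ρ : RHO G v) : Walk G.H where
  e := G.edg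
  rf := rfFun G v ρ
  Av := fun h => G.vtx h = v
  dec := fun h => inferInstanceAs (Decidable (G.vtx h = v))
  he := G.edg_invol
  hef := fun h => hvac h
  hr := by
    intro h
    by_cases hA : G.vtx h = v
    · rw [rfFun_av G v ρ h hA, rfFun_av G v ρ h hA]
    · rw [rfFun_nav G v ρ h hA]
      have hA2 : ¬ G.vtx ((ρ.1 ⟨h, hA⟩).1) = v := (ρ.1 ⟨h, hA⟩).2
      rw [rfFun_nav G v ρ _ hA2]
      exact congrArg Subtype.val (ρ.2.1 ⟨h, hA⟩)
  hrAv := fun h hA => rfFun_av G v ρ h hA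
  hriff := by
    intro h
    constructor
    · intro hA
      by_contra hA2
      rw [rfFun_nav G v ρ h hA2] at hA
      exact (ρ.1 ⟨h, hA2⟩).2 hA
    · intro hA
      rw [rfFun_av G v ρ h hA]
      exact hA
  hrne := by
    intro h hA hc
    rw [rfFun_nav G v ρ h hA] at hc
    exact ρ.2.2.1 ⟨h, hA⟩ (Subtype.ext hc)

def combineFn (π : FPF (Xv G v)) (ρ : RHO G v) : G.H → G.H := fun h =>
  if hA : G.vtx h = v then (π.1 ⟨h, hA⟩).1 else (ρ.1 ⟨h, hA⟩).1

theorem combineFn_av (π : FPF (Xv G v)) (ρ : RHO G v) (h : G.H) (hA : G.vtx h = v) :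
    combineFn G v π ρ h = (π.1 ⟨h, hA⟩).1 := by
  rw [combineFn, dif_pos hA]

theorem combineFn_nav (π : FPF (Xv G v)) (ρ : RHO G v) (h : G.H) (hA : ¬ G.vtx h = v) :
    combineFn G v π ρ h = (ρ.1 ⟨h, hA⟩).1 := by
  rw [combineFn, dif_neg hA]

theorem combineFn_vtx (π : FPF (Xv G v)) (ρ : RHO G v) (h : G.H) :
    G.vtx (combineFn G v π ρ h) = G.vtx h := by
  by_cases hA : G.vtx h = v
  · rw [combineFn_av G v π ρ h hA, (π.1 ⟨h, hA⟩).2, hA]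
  · rw [combineFn_nav G v π ρ h hA]
    exact ρ.2.2.2 ⟨h, hA⟩

theorem combineFn_invol (π : FPF (Xv G v)) (ρ : RHO G v) (h : G.H) :
    combineFn G v π ρ (combineFn G v π ρ h) = h := by
  by_cases hA : G.vtx h = v
  · rw [combineFn_av G v π ρ h hA]
    rw [combineFn_av G v π ρ _ (π.1 ⟨h, hA⟩).2]
    exact congrArg Subtype.val (π.2.1 ⟨h, hA⟩)
  · rw [combineFn_nav G v π ρ h hA]
    rw [combineFn_nav G v π ρ _ (ρ.1 ⟨h, hA⟩).2]
    exact congrArg Subtype.val (ρ.2.1 ⟨h, hA⟩)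

theorem combineFn_ne (π : FPF (Xv G v)) (ρ : RHO G v) (h : G.H) :
    combineFn G v π ρ h ≠ h := by
  by_cases hA : G.vtx h = v
  · rw [combineFn_av G v π ρ h hA]
    intro hc
    exact π.2.2 ⟨h, hA⟩ (Subtype.ext hc)
  · rw [combineFn_nav G v π ρ h hA]
    intro hc
    exact ρ.2.2.1 ⟨h, hA⟩ (Subtype.ext hc)

def mkD (π : FPF (Xv G v)) (ρ : RHO G v) : G.Decomp :=
  ⟨combineFn G v π ρ, combineFn_invol G v π ρ, combineFn_ne G v π ρ, combineFn_vtx G v π ρ⟩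

def eqDecomp : G.Decomp ≃ FPF (Xv G v) × RHO G v where
  toFun := fun d =>
    (⟨fun a => ⟨d.1 a.1, by rw [d.2.2.2]; exact a.2⟩,
      fun a => Subtype.ext (d.2.1 a.1),
      fun a hc => d.2.2.1 a.1 (congrArg Subtype.val hc)⟩,
     ⟨fun y => ⟨d.1 y.1, by rw [d.2.2.2]; exact y.2⟩,
      fun y => Subtype.ext (d.2.1 y.1),
      fun y hc => d.2.2.1 y.1 (congrArg Subtype.val hc),
      fun y => d.2.2.2 y.1⟩)
  invFun := fun pr => mkD G v pr.1 pr.2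
  left_inv := by
    intro d
    apply Subtype.ext
    funext h
    by_cases hA : G.vtx h = v
    · exact combineFn_av G v _ _ h hA
    · exact combineFn_nav G v _ _ h hA
  right_inv := by
    intro pr
    apply Prod.ext
    · apply Subtype.ext
      funext a
      apply Subtype.ext
      exact combineFn_av G v pr.1 pr.2 a.1 a.2
    · apply Subtype.ext
      funext y
      apply Subtype.ext
      exact combineFn_nav G v pr.1 pr.2 y.1 y.2

def DcOf (hvac : G.IsVacuum) (π : FPF (Xv G v)) (ρ : RHO G v) : (Wk G v hvac ρ).Dc where
  dc := combineFn G v π ρ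
  invol := combineFn_invol G v π ρ
  av := fun h => by
    show G.vtx (combineFn G v π ρ h) = v ↔ G.vtx h = v
    rw [combineFn_vtx G v π ρ h]
  off := fun h hA => by
    show combineFn G v π ρ h = rfFun G v ρ h
    rw [combineFn_nav G v π ρ h hA, rfFun_nav G v ρ h hA]

theorem pX_eq (hvac : G.IsVacuum) (π : FPF (Xv G v)) (ρ : RHO G v) :
    (Wk G v hvac ρ).pX (DcOf G v hvac π ρ) = π.1 := by
  funext a
  apply Subtype.ext
  show combineFn G v π ρ a.1 = (π.1 a).1
  rw [combineFn_av G v π ρ a.1 a.2]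
  rfl

end GraphSide
end CPZ
namespace CPZ
open Relation Polynomial

section Final
variable (G : HGraph) (v : G.V)

theorem prod_ne_zero (p : ℕ) :
    (∏ j ∈ Finset.range p,
      ((Polynomial.X : Polynomial ℤ) + Polynomial.C (2 * (j : ℤ)))) ≠ 0 := by
  intro hc
  have h1 := congrArg (Polynomial.eval 1) hc
  rw [Polynomial.eval_prod, Polynomial.eval_zero] at h1
  have h2 : ∀ j ∈ Finset.range p,
      (0:ℤ) < Polynomial.eval 1 ((Polynomial.X : Polynomial ℤ) + Polynomial.C (2 * (j:ℤ))) := by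
    intro j _
    simp only [Polynomial.eval_add, Polynomial.eval_X, Polynomial.eval_C]
    positivity
  have h3 := Finset.prod_pos h2
  rw [h1] at h3
  exact lt_irrefl 0 h3

theorem ncirc_split (hvac : G.IsVacuum) (π π₀ : FPF (Xv G v)) (ρ : RHO G v) :
    G.ncircuits (mkD G v π ρ) =
      Nat.card (Quotient (pairSetoid π.1 ((Wk G v hvac ρ).tX))) +
      Nat.card {c : Quotient (pairSetoid G.edg (combineFn G v π₀ ρ)) //
        ¬ (Wk G v hvac ρ).MeetsQ (DcOf G v hvac π₀ ρ) c} := by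
  have h0 : G.ncircuits (mkD G v π ρ) = Nat.card (G.Circuits (mkD G v π ρ)) :=
    Nat.card_congr (Equiv.subtypeUnivEquiv (fun c h _ => hvac h))
  have hset : G.dsetoid (mkD G v π ρ) = pairSetoid G.edg (combineFn G v π ρ) :=
    Setoid.ext fun a b => Iff.rfl
  have h1 : Nat.card (G.Circuits (mkD G v π ρ)) =
      Nat.card (Quotient (pairSetoid G.edg (combineFn G v π ρ))) := by
    unfold HGraph.Circuits
    rw [hset]
  have h2 := (Wk G v hvac ρ).card_split (DcOf G v hvac π ρ)
  have h3 : Nat.card (Quotient (pairSetoid ((Wk G v hvac ρ).pX (DcOf G v hvac π ρ))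
      ((Wk G v hvac ρ).tX))) = Nat.card (Quotient (pairSetoid π.1 ((Wk G v hvac ρ).tX))) := by
    rw [pX_eq G v hvac π ρ]; rfl
  have h4 := (Wk G v hvac ρ).avoid_card (DcOf G v hvac π ρ) (DcOf G v hvac π₀ ρ)
  rw [h0, h1]
  exact h2.trans (by rw [h3, h4]; rfl)

theorem keyJ (hvac : G.IsVacuum) (p : ℕ) (hv : G.valence v = 2 * p) :
    ∃ Q : Polynomial ℤ, G.J =
      Q * ∏ j ∈ Finset.range p, (Polynomial.X + Polynomial.C (2 * (j:ℤ))) := by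
  classical
  have hcardX : Fintype.card (Xv G v) = 2 * p := hv
  have hJ : G.J = ∑ d : G.Decomp, (Polynomial.X : Polynomial ℤ) ^ G.ncircuits d := rfl
  by_cases hR : Nonempty (RHO G v)
  · obtain ⟨ρ₀⟩ := hR
    have hL1 : ∀ ρ : RHO G v, (∑ π : FPF (Xv G v), (Polynomial.X : Polynomial ℤ) ^
        Nat.card (Quotient (pairSetoid π.1 ((Wk G v hvac ρ).tX)))) =
        ∏ j ∈ Finset.range p, (Polynomial.X + Polynomial.C (2 * (j:ℤ))) :=
      fun ρ => L1 p (Xv G v) hcardX ((Wk G v hvac ρ).tX)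
        (Walk.tX_invol (Wk G v hvac ρ)) (Walk.tX_ne (Wk G v hvac ρ))
    have hFne : Nonempty (FPF (Xv G v)) := by
      by_contra hc
      have hempty : IsEmpty (FPF (Xv G v)) := not_nonempty_iff.mp hc
      have h0 := hL1 ρ₀
      rw [Finset.univ_eq_empty, Finset.sum_empty] at h0
      exact prod_ne_zero p h0.symm
    obtain ⟨π₀⟩ := hFne
    refine ⟨∑ ρ : RHO G v, (Polynomial.X : Polynomial ℤ) ^
      (Nat.card {c : Quotient (pairSetoid G.edg (combineFn G v π₀ ρ)) //
        ¬ (Wk G v hvac ρ).MeetsQ (DcOf G v hvac π₀ ρ) c}), ?_⟩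
    rw [hJ]
    rw [← Equiv.sum_comp (eqDecomp G v).symm
      (fun d => (Polynomial.X : Polynomial ℤ) ^ G.ncircuits d)]
    rw [Fintype.sum_prod_type]
    rw [Finset.sum_comm]
    have hinner : ∀ ρ : RHO G v,
        (∑ π : FPF (Xv G v),
          (Polynomial.X : Polynomial ℤ) ^ G.ncircuits ((eqDecomp G v).symm (π, ρ))) =
        (Polynomial.X : Polynomial ℤ) ^
          (Nat.card {c : Quotient (pairSetoid G.edg (combineFn G v π₀ ρ)) //
            ¬ (Wk G v hvac ρ).MeetsQ (DcOf G v hvac π₀ ρ) c}) *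
        ∏ j ∈ Finset.range p, (Polynomial.X + Polynomial.C (2 * (j:ℤ))) := by
      intro ρ
      have hterm : ∀ π : FPF (Xv G v),
        (Polynomial.X : Polynomial ℤ) ^ G.ncircuits ((eqDecomp G v).symm (π, ρ)) =
        (Polynomial.X : Polynomial ℤ) ^
          (Nat.card {c : Quotient (pairSetoid G.edg (combineFn G v π₀ ρ)) //
            ¬ (Wk G v hvac ρ).MeetsQ (DcOf G v hvac π₀ ρ) c}) *
        (Polynomial.X : Polynomial ℤ) ^
          Nat.card (Quotient (pairSetoid π.1 ((Wk G v hvac ρ).tX))) := by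
        intro π
        have hmk : (eqDecomp G v).symm (π, ρ) = mkD G v π ρ := rfl
        rw [hmk, ncirc_split G v hvac π π₀ ρ, pow_add, mul_comm]
      rw [Finset.sum_congr rfl (fun π _ => hterm π), ← Finset.mul_sum, hL1 ρ]
    rw [Finset.sum_congr rfl (fun ρ _ => hinner ρ), ← Finset.sum_mul]
  · have hde : IsEmpty G.Decomp := ⟨fun d => hR ⟨((eqDecomp G v) d).2⟩⟩
    refine ⟨0, ?_⟩
    rw [hJ, Finset.univ_eq_empty, Finset.sum_empty, zero_mul]

end Final
end CPZ

/-- Let `G` be a vacuum graph (a completion) containing a vertex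
of valence `2p` for some `p ≥ 1`.  Then `∏_{j=0}^{p-1}(N+2j)` divides `J(G,N)`;
in particular `J(G,N)` and `T(G,N)` vanish at every `N ∈ {0, -2, …, -2p+2}`. -/
theorem circuit_partition_zeros (G : HGraph) (hvac : G.IsVacuum)
    (p : ℕ) (hp : 1 ≤ p) (v : G.V) (hv : G.valence v = 2 * p) :
    ((∏ j ∈ Finset.range p, (Polynomial.X + Polynomial.C (2 * (j : ℤ)))) ∣ G.J) ∧
    ∀ j : ℕ, j < p →
      G.J.eval (-(2 * (j : ℤ))) = 0 ∧ G.T.eval (-(2 * (j : ℚ))) = 0 := by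
  obtain ⟨Q, hQ⟩ := CPZ.keyJ G v hvac p hv
  have hdvd : (∏ j ∈ Finset.range p, (Polynomial.X + Polynomial.C (2 * (j : ℤ)))) ∣ G.J :=
    ⟨Q, by rw [hQ]; ring⟩
  refine ⟨hdvd, ?_⟩
  intro j hj
  have hJval : G.J.eval (-(2 * (j:ℤ))) = 0 := by
    rw [hQ, Polynomial.eval_mul]
    have hz : (∏ i ∈ Finset.range p,
        ((Polynomial.X : Polynomial ℤ) + Polynomial.C (2 * (i:ℤ)))).eval (-(2*(j:ℤ))) = 0 := by
      rw [Polynomial.eval_prod]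
      apply Finset.prod_eq_zero (Finset.mem_range.mpr hj)
      simp
    rw [hz, mul_zero]
  refine ⟨hJval, ?_⟩
  have hT : G.T = Polynomial.C (((G.J.eval 1 : ℤ) : ℚ))⁻¹ * G.J.map (Int.castRingHom ℚ) := rfl
  rw [hT, Polynomial.eval_mul, Polynomial.eval_C]
  have hcast : (-(2 * (j:ℚ))) = (Int.castRingHom ℚ) (-(2 * (j:ℤ))) := by simp
  rw [hcast, Polynomial.eval_map, Polynomial.eval₂_at_apply, hJval]
  simp
end
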